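/- arXiv:2111.04925 — 9 statements merged into one kernel-verified Lean document; each statement's English description precedes it below -/
import Mathlib

section
/- For any k ≥ 1 and n ≥ 1, the number of binary words of length n containing a fixed binary word w of length k as a subsequence depends only on k (not on w); equivalently, it equals the number of binary words of length n containing 0^k as a subsequence. -/
/-!
Over a finite alphabet with `q` letters, split a word `x :: v` containing `c :: t` by whether its
first letter is `c`: if so, the rest must contain `t`; otherwise the rest must still contain
`c :: t`, since the leftmost occurrence of `c :: t` cannot start at `x`. This gives the recurrence
`N (n + 1) (c :: t) = N n t + (q - 1) * N n (c :: t)`, which does not involve the letter `c`.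
Induction on `n` therefore shows that `N n w` depends on `w` only through its length.
-/

namespace List

variable {α : Type*}

def wordsContaining (n : ℕ) (w : List α) : Set (List α) :=
  {v | v.length = n ∧ w.Sublist v}

theorem wordsContaining_finite [Finite α] (n : ℕ) (w : List α) :
    (wordsContaining n w).Finite :=
  (finite_length_eq α n).subset fun _ h => h.1

theorem wordsContaining_zero_cons (c : α) (t : List α) :
    wordsContaining 0 (c :: t) = ∅ := by
  ext v
  simp only [wordsContaining, Set.mem_ofPred_eq, length_eq_zero_iff, Set.mem_empty_iff_false,
    iff_false, not_and]
  rintro rfl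
  exact fun h => by simpa using h.length_le

theorem wordsContaining_succ_cons (n : ℕ) (c : α) (t : List α) :
    wordsContaining (n + 1) (c :: t) = (fun p : α × List α => p.1 :: p.2) ''
      ({c} ×ˢ wordsContaining n t ∪ {c}ᶜ ×ˢ wordsContaining n (c :: t)) := by
  ext v
  constructor
  · rintro ⟨hlen, hsub⟩
    obtain ⟨x, v, rfl⟩ := exists_cons_of_length_eq_add_one hlen
    refine ⟨(x, v), ?_, rfl⟩
    by_cases hx : x = c
    · subst hx
      exact Or.inl ⟨rfl, by simpa using hlen, cons_sublist_cons.mp hsub⟩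
    · refine Or.inr ⟨hx, by simpa using hlen, ?_⟩
      rcases sublist_cons_iff.mp hsub with h | ⟨r, hr, _⟩
      · exact h
      · exact absurd (cons.inj hr).1.symm hx
  · rintro ⟨⟨x, v⟩, (⟨rfl, hlen, hsub⟩ | ⟨-, hlen, hsub⟩), rfl⟩
    · exact ⟨by simp [hlen], hsub.cons_cons x⟩
    · exact ⟨by simp [hlen], hsub.cons x⟩

theorem ncard_wordsContaining_succ_cons [Finite α] (n : ℕ) (c : α) (t : List α) :
    (wordsContaining (n + 1) (c :: t)).ncard
      = (wordsContaining n t).ncard + (Nat.card α - 1) * (wordsContaining n (c :: t)).ncard := by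
  have hdisj : _root_.Disjoint ({c} ×ˢ wordsContaining n t) ({c}ᶜ ×ˢ wordsContaining n (c :: t)) :=
    Set.disjoint_prod.mpr (Or.inl disjoint_compl_right)
  have hcons : Function.Injective fun p : α × List α => p.1 :: p.2 :=
    fun _ _ h => Prod.ext (cons.inj h).1 (cons.inj h).2
  rw [wordsContaining_succ_cons, Set.ncard_image_of_injective _ hcons,
    Set.ncard_union_eq hdisj ((Set.finite_singleton c).prod (wordsContaining_finite n t))
      ((Set.toFinite _).prod (wordsContaining_finite n (c :: t))),
    Set.ncard_prod, Set.ncard_prod, Set.ncard_singleton, Set.ncard_compl, Set.ncard_singleton,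
    one_mul]

theorem ncard_wordsContaining_eq_of_length_eq [Finite α] (n : ℕ) {w w' : List α}
    (h : w.length = w'.length) :
    (wordsContaining n w).ncard = (wordsContaining n w').ncard := by
  induction n generalizing w w' with
  | zero =>
    match w, w', h with
    | [], [], _ => rfl
    | _ :: _, _ :: _, _ => simp only [wordsContaining_zero_cons]
  | succ n ih =>
    match w, w', h with
    | [], [], _ => rfl
    | c :: t, c' :: t', h =>
      rw [ncard_wordsContaining_succ_cons, ncard_wordsContaining_succ_cons,
        ih (Nat.succ.inj h), ih h]

end List

theorem binary_words_containing_count_general (n k : ℕ)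
    (w : List Bool) (hw : w.length = k) :
    {v : List Bool | v.length = n ∧ w.Sublist v}.ncard
      = {v : List Bool | v.length = n ∧ (List.replicate k false).Sublist v}.ncard :=
  List.ncard_wordsContaining_eq_of_length_eq n (by rw [hw, List.length_replicate])

/-- The number of binary words of length `n` containing a fixed word `w` of
length `k` as a subsequence depends only on `k`: it equals the number of
those containing `0^k`. -/
theorem binary_words_containing_count (n k : ℕ) (hn : 1 ≤ n) (hk : 1 ≤ k)
    (w : List Bool) (hw : w.length = k) :
    {v : List Bool | v.length = n ∧ w.Sublist v}.ncard
      = {v : List Bool | v.length = n ∧ (List.replicate k false).Sublist v}.ncard :=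
  binary_words_containing_count_general n k w hw
end

section
/- For n ≥ 2, the number of circular permutations of [n] avoiding the circular pattern [1342] equals 2^{n-1} - (n-1). -/
/-- `t` is order-isomorphic to the pattern `p` (entrywise order comparison). -/
def IsoTo (t p : List ℕ) : Prop :=
  t.length = p.length ∧ ∀ i j, i < t.length → j < t.length →
    (t.getD i 0 < t.getD j 0 ↔ p.getD i 0 < p.getD j 0)

/-- `σ` (linearly) contains the pattern `π`: some subsequence of `σ` is
order-isomorphic to `π`. -/
def LContains (σ π : List ℕ) : Prop := ∃ t, t.Sublist σ ∧ IsoTo t π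

/-- The circular permutation `[σ]` contains the circular pattern `[π]`:
some cyclic rotation of `σ` linearly contains `π`. -/
def CContains (σ π : List ℕ) : Prop := ∃ k, LContains (σ.rotate k) π

/-- Canonical representative of a circular permutation of `[n]`:
a permutation of `1,…,n` (in one-line list form) starting with `1`. -/
def IsCirc (n : ℕ) (l : List ℕ) : Prop :=
  l.Perm (List.range' 1 n) ∧ l.head? = some 1

/-!
Write a circular permutation of `[n]` as `1 :: t`. Cutting an occurrence of `1342` in a rotation
where the rotation wraps around shows that `1 :: t` contains `231` (the `342`), `4213` or `2134`;
conversely the leading minimum `1` extends a `231` of `t` to a `1342`, and `2134`, `4213` are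
rotations of `1342`. So the count is that of permutations `t` of `[2, n]` avoiding `231`, `2134` and
`4213`.

Such a permutation of an interval `[lo, hi]` either starts with `lo`, followed by any such
permutation of the rest, or starts with some `k > lo`. In the second case avoiding `231` puts the
entries below `k` before those above `k`, avoiding `2134` makes the entries above `k` decrease, and
the entries below `k` avoid `213` and `231`, i.e. each of them is the minimum or the maximum of the
entries from it onwards, which leaves `2 ^ (k - lo - 1)` choices. So the number `f s` of such
permutations of `s` consecutive integers satisfies `f (s + 1) = f s + (2 ^ s - 1)`, and
`f s = 2 ^ s - s`.
-/

namespace List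

variable {α : Type*}

theorem exists_append_sublist_rotate_of_append_sublist {p q l : List α} (h : p ++ q <+ l) :
    ∃ k, q ++ p <+ l.rotate k := by
  obtain ⟨u, v, rfl, hu, hv⟩ := append_sublist_iff.mp h
  exact ⟨u.length, by rw [rotate_append_length_eq]; exact hv.append hu⟩

theorem exists_append_sublist_of_sublist_rotate {s l : List α} {k : ℕ} (h : s <+ l.rotate k) :
    ∃ s₁ s₂, s = s₁ ++ s₂ ∧ s₂ ++ s₁ <+ l := by
  rw [rotate_eq_drop_append_take_mod] at h
  obtain ⟨s₁, s₂, rfl, h₁, h₂⟩ := sublist_append_iff.mp h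
  exact ⟨s₁, s₂, rfl, take_append_drop (k % l.length) l ▸ h₂.append h₁⟩

theorem cons_sublist_cons_cases {a x : α} {s l : List α} (h : x :: s <+ a :: l) :
    x :: s <+ l ∨ (x = a ∧ s <+ l) := by
  rcases sublist_cons_iff.mp h with h | ⟨r, hr, hs⟩
  · exact Or.inl h
  · obtain ⟨rfl, rfl⟩ := cons.inj hr
    exact Or.inr ⟨rfl, hs⟩

theorem pair_sublist_or_pair_sublist_of_mem {l : List α} {a b : α} (ha : a ∈ l) (hb : b ∈ l)
    (hab : a ≠ b) : [a, b] <+ l ∨ [b, a] <+ l := by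
  induction l with
  | nil => simp at ha
  | cons x l ih =>
    rcases mem_cons.mp ha with rfl | ha' <;> rcases mem_cons.mp hb with rfl | hb'
    · exact absurd rfl hab
    · exact Or.inl ((singleton_sublist.mpr hb').cons_cons a)
    · exact Or.inr ((singleton_sublist.mpr ha').cons_cons b)
    · exact (ih ha' hb').imp (·.cons x) (·.cons x)

theorem perm_range'_iff {l : List ℕ} {a n : ℕ} :
    l ~ range' a n ↔ l.Nodup ∧ ∀ x, x ∈ l ↔ a ≤ x ∧ x < a + n := by
  refine ⟨fun h => ⟨h.nodup_iff.mpr nodup_range', fun x => by rw [h.mem_iff, mem_range'_1]⟩,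
    fun ⟨hnd, hmem⟩ => (perm_ext_iff_of_nodup hnd nodup_range').mpr fun x => ?_⟩
  rw [hmem, mem_range'_1]

theorem cons_perm_range'_succ_iff {l : List ℕ} {a n : ℕ} :
    a :: l ~ range' a (n + 1) ↔ l ~ range' (a + 1) n := by
  rw [range'_succ, perm_cons]

theorem cons_perm_range'_succ_iff_of_last {l : List ℕ} {a n : ℕ} :
    (a + n) :: l ~ range' a (n + 1) ↔ l ~ range' a n := by
  have h : range' a (n + 1) ~ (a + n) :: range' a n := by
    rw [range'_concat, one_mul]; exact perm_append_singleton _ _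
  exact ⟨fun hl => (perm_cons _).mp (hl.trans h), fun hl => (hl.cons _).trans h.symm⟩

theorem bounds_of_mem_of_perm_range' {l : List ℕ} {a n x : ℕ} (h : l ~ range' a n) (hx : x ∈ l) :
    a ≤ x ∧ x < a + n :=
  mem_range'_1.mp (h.subset hx)

theorem eq_reverse_range'_of_perm_of_pairwise_gt {l : List ℕ} {a n : ℕ} (h : l ~ range' a n)
    (hl : l.Pairwise (· > ·)) : l = (range' a n).reverse :=
  (h.trans (reverse_perm _).symm).eq_of_pairwise' (r := (· ≥ ·)) (hl.imp le_of_lt)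
    (pairwise_reverse.mpr (Pairwise.imp le_of_lt pairwise_lt_range'))

end List

namespace Circ1342

open List

def Avoids213 (l : List ℕ) : Prop := ∀ x y z, [x, y, z] <+ l → ¬(y < x ∧ x < z)

def Avoids231 (l : List ℕ) : Prop := ∀ x y z, [x, y, z] <+ l → ¬(z < x ∧ x < y)

def Avoids2134 (l : List ℕ) : Prop := ∀ w x y z, [w, x, y, z] <+ l → ¬(x < w ∧ w < y ∧ y < z)

def Avoids4213 (l : List ℕ) : Prop := ∀ w x y z, [w, x, y, z] <+ l → ¬(y < x ∧ x < z ∧ z < w)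

structure Avoids231_2134_4213 (l : List ℕ) : Prop where
  avoids231 : Avoids231 l
  avoids2134 : Avoids2134 l
  avoids4213 : Avoids4213 l

variable {l t : List ℕ}

theorem Avoids213.sublist (h : Avoids213 l) (ht : t <+ l) : Avoids213 t :=
  fun x y z hs => h x y z (hs.trans ht)

theorem Avoids231.sublist (h : Avoids231 l) (ht : t <+ l) : Avoids231 t :=
  fun x y z hs => h x y z (hs.trans ht)

theorem Avoids231_2134_4213.sublist (h : Avoids231_2134_4213 l) (ht : t <+ l) :
    Avoids231_2134_4213 t where
  avoids231 := h.avoids231.sublist ht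
  avoids2134 w x y z hs := h.avoids2134 w x y z (hs.trans ht)
  avoids4213 w x y z hs := h.avoids4213 w x y z (hs.trans ht)

theorem Avoids231_2134_4213.cons_of_forall_lt (h : Avoids231_2134_4213 l) {m : ℕ}
    (hm : ∀ x ∈ l, m < x) : Avoids231_2134_4213 (m :: l) where
  avoids231 x y z hs hxyz := by
    rcases cons_sublist_cons_cases hs with hs | ⟨rfl, hl⟩
    · exact h.avoids231 x y z hs hxyz
    · exact absurd (hm z (hl.subset (by simp))) (by omega)
  avoids2134 w x y z hs hwxyz := by
    rcases cons_sublist_cons_cases hs with hs | ⟨rfl, hl⟩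
    · exact h.avoids2134 w x y z hs hwxyz
    · exact absurd (hm x (hl.subset (by simp))) (by omega)
  avoids4213 w x y z hs hwxyz := by
    rcases cons_sublist_cons_cases hs with hs | ⟨rfl, hl⟩
    · exact h.avoids4213 w x y z hs hwxyz
    · exact absurd (hm y (hl.subset (by simp))) (by omega)

theorem Avoids213.cons (h : Avoids213 l) {a : ℕ} (ha : (∀ x ∈ l, a < x) ∨ ∀ x ∈ l, x < a) :
    Avoids213 (a :: l) := by
  intro x y z hs hxyz
  rcases cons_sublist_cons_cases hs with hs | ⟨rfl, hl⟩
  · exact h x y z hs hxyz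
  · rcases ha with ha | ha
    · exact absurd (ha y (hl.subset (by simp))) (by omega)
    · exact absurd (ha z (hl.subset (by simp))) (by omega)

theorem Avoids231.cons (h : Avoids231 l) {a : ℕ} (ha : (∀ x ∈ l, a < x) ∨ ∀ x ∈ l, x < a) :
    Avoids231 (a :: l) := by
  intro x y z hs hxyz
  rcases cons_sublist_cons_cases hs with hs | ⟨rfl, hl⟩
  · exact h x y z hs hxyz
  · rcases ha with ha | ha
    · exact absurd (ha z (hl.subset (by simp))) (by omega)
    · exact absurd (ha y (hl.subset (by simp))) (by omega)

/-! ### Circular containment of `1342` -/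

theorem isoTo_1342_iff (a b c d : ℕ) :
    IsoTo [a, b, c, d] [1, 3, 4, 2] ↔ a < d ∧ d < b ∧ b < c := by
  constructor
  · rintro ⟨-, h⟩
    have h03 := h 0 3 (by simp) (by simp)
    have h31 := h 3 1 (by simp) (by simp)
    have h12 := h 1 2 (by simp) (by simp)
    simp only [getD_cons_zero, getD_cons_succ] at h03 h31 h12
    omega
  · rintro ⟨h₁, h₂, h₃⟩
    refine ⟨rfl, fun i j hi hj => ?_⟩
    simp only [length_cons, length_nil] at hi hj
    interval_cases i <;> interval_cases j <;> simp <;> omega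

theorem not_avoids231_2134_4213_of_cContains (h : CContains l [1, 3, 4, 2]) :
    ¬ Avoids231_2134_4213 l := by
  rintro ⟨h231, h2134, h4213⟩
  obtain ⟨k, p, hp, hiso⟩ := h
  obtain ⟨a, b, c, d, rfl⟩ := length_eq_four.mp hiso.1
  obtain ⟨had, hdb, hbc⟩ := (isoTo_1342_iff a b c d).mp hiso
  obtain ⟨s₁, s₂, hs, hsub⟩ := exists_append_sublist_of_sublist_rotate hp
  -- wherever the rotation cuts `a b c d`, `l` contains `b c d` (a `231`), `c d a b` or `d a b c`
  rcases s₁ with _ | ⟨_, _ | ⟨_, _ | ⟨_, _ | ⟨_, s₁⟩⟩⟩⟩ <;>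
    simp only [nil_append, cons_append, cons.injEq] at hs
  · obtain rfl := hs
    exact h231 b c d ((sublist_cons_self a _).trans (by simpa using hsub)) ⟨hdb, hbc⟩
  · obtain ⟨rfl, rfl⟩ := hs
    exact h231 b c d ((sublist_append_left _ _).trans hsub) ⟨hdb, hbc⟩
  · obtain ⟨rfl, rfl, rfl⟩ := hs
    exact h4213 c d a b hsub ⟨had, hdb, hbc⟩
  · obtain ⟨rfl, rfl, rfl, rfl⟩ := hs
    exact h2134 d a b c hsub ⟨had, hdb, hbc⟩
  · obtain ⟨rfl, rfl, rfl, rfl, hnil⟩ := hs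
    obtain ⟨rfl, rfl⟩ := append_eq_nil_iff.mp hnil.symm
    exact h231 b c d ((sublist_cons_self a _).trans (by simpa using hsub)) ⟨hdb, hbc⟩

theorem cContains_1342_cons_of_not_avoids231_2134_4213 {m : ℕ} (hm : ∀ x ∈ l, m < x)
    (h : ¬ Avoids231_2134_4213 l) : CContains (m :: l) [1, 3, 4, 2] := by
  by_contra hc
  refine h ⟨fun x y z hs hxyz => hc ⟨0, [m, x, y, z], ?_, ?_⟩,
    fun w x y z hs hwxyz => ?_, fun w x y z hs hwxyz => ?_⟩
  · simpa using hs.cons_cons m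
  · exact (isoTo_1342_iff m x y z).mpr ⟨hm z (hs.subset (by simp)), hxyz⟩
  · obtain ⟨k, hk⟩ := exists_append_sublist_rotate_of_append_sublist (p := [w]) (q := [x, y, z])
      (hs.trans (sublist_cons_self m l))
    exact hc ⟨k, [x, y, z, w], hk, (isoTo_1342_iff x y z w).mpr hwxyz⟩
  · obtain ⟨k, hk⟩ := exists_append_sublist_rotate_of_append_sublist (p := [w, x]) (q := [y, z])
      (hs.trans (sublist_cons_self m l))
    exact hc ⟨k, [y, z, w, x], hk, (isoTo_1342_iff y z w x).mpr hwxyz⟩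

theorem not_cContains_1342_cons_iff {m : ℕ} (hm : ∀ x ∈ l, m < x) :
    ¬ CContains (m :: l) [1, 3, 4, 2] ↔ Avoids231_2134_4213 l :=
  ⟨fun h => by_contra fun h' => h (cContains_1342_cons_of_not_avoids231_2134_4213 hm h'),
    fun h hc => not_avoids231_2134_4213_of_cContains hc (h.cons_of_forall_lt hm)⟩

/-! ### Permutations avoiding `213` and `231` -/

def minMaxPerms (lo m : ℕ) : Set (List ℕ) :=
  {A | A ~ range' lo m ∧ Avoids213 A ∧ Avoids231 A}

theorem length_of_mem_minMaxPerms {lo m : ℕ} {A : List ℕ} (hA : A ∈ minMaxPerms lo m) :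
    A.length = m := by
  simpa using hA.1.length_eq

theorem minMaxPerms_one (lo : ℕ) : minMaxPerms lo 1 = {[lo]} := by
  ext A
  simp only [minMaxPerms, range'_one, perm_singleton, Set.mem_singleton_iff]
  refine ⟨And.left, fun hA => ⟨hA, ?_, ?_⟩⟩ <;> subst hA <;>
    intro x y z hs <;> simpa using hs.length_le

theorem head_eq_of_cons_mem_minMaxPerms {lo m a : ℕ} {A : List ℕ}
    (h : a :: A ∈ minMaxPerms lo (m + 2)) : a = lo ∨ a = lo + (m + 1) := by
  obtain ⟨hperm, h213, h231⟩ := h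
  have hmem := (perm_range'_iff.mp hperm).2
  have ha := (hmem a).mp mem_cons_self
  by_contra! hne
  -- otherwise the minimum and the maximum follow `a`, in one order or the other
  have hmem' : ∀ x, lo ≤ x → x < lo + (m + 2) → x ≠ a → x ∈ A := fun x h₁ h₂ hx =>
    (mem_cons.mp ((hmem x).mpr ⟨h₁, h₂⟩)).resolve_left hx
  rcases pair_sublist_or_pair_sublist_of_mem (hmem' lo le_rfl (by omega) (by omega))
    (hmem' (lo + (m + 1)) (by omega) (by omega) (by omega)) (by omega) with hs | hs
  · exact h213 a lo (lo + (m + 1)) (hs.cons_cons a) (by omega)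
  · exact h231 a (lo + (m + 1)) lo (hs.cons_cons a) (by omega)

theorem minMaxPerms_add_two (lo m : ℕ) :
    minMaxPerms lo (m + 2) =
      (lo :: ·) '' minMaxPerms (lo + 1) (m + 1) ∪
        ((lo + (m + 1)) :: ·) '' minMaxPerms lo (m + 1) := by
  ext A
  constructor
  · intro hA
    obtain ⟨a, A, rfl⟩ := exists_cons_of_length_eq_add_one (length_of_mem_minMaxPerms hA)
    obtain ⟨hperm, h213, h231⟩ := hA
    have h213' := h213.sublist (sublist_cons_self a A)
    have h231' := h231.sublist (sublist_cons_self a A)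
    rcases head_eq_of_cons_mem_minMaxPerms ⟨hperm, h213, h231⟩ with rfl | rfl
    · exact Or.inl ⟨A, ⟨cons_perm_range'_succ_iff.mp hperm, h213', h231'⟩, rfl⟩
    · exact Or.inr ⟨A, ⟨cons_perm_range'_succ_iff_of_last.mp hperm, h213', h231'⟩, rfl⟩
  · rintro (⟨A, ⟨hperm, h213, h231⟩, rfl⟩ | ⟨A, ⟨hperm, h213, h231⟩, rfl⟩)
    · have hgt : ∀ x ∈ A, lo < x := fun x hx => by
        have := mem_range'_1.mp (hperm.subset hx); omega
      exact ⟨cons_perm_range'_succ_iff.mpr hperm, h213.cons (Or.inl hgt), h231.cons (Or.inl hgt)⟩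
    · have hlt : ∀ x ∈ A, x < lo + (m + 1) := fun x hx => by
        have := mem_range'_1.mp (hperm.subset hx); omega
      exact ⟨cons_perm_range'_succ_iff_of_last.mpr hperm, h213.cons (Or.inr hlt),
        h231.cons (Or.inr hlt)⟩

theorem encard_minMaxPerms (m : ℕ) : ∀ lo, (minMaxPerms lo (m + 1)).encard = 2 ^ m := by
  induction m with
  | zero => intro lo; simp [minMaxPerms_one]
  | succ m ih =>
    intro lo
    have hdisj : Disjoint ((lo :: ·) '' minMaxPerms (lo + 1) (m + 1))
        (((lo + (m + 1)) :: ·) '' minMaxPerms lo (m + 1)) := by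
      rw [Set.disjoint_left]
      rintro _ ⟨A, -, rfl⟩ ⟨B, -, h⟩
      have := (cons.inj h).1
      omega
    rw [minMaxPerms_add_two, Set.encard_union_eq hdisj, cons_injective.encard_image,
      cons_injective.encard_image, ih, ih, pow_succ, mul_two]

def minMaxPermsUpTo (lo s : ℕ) : Set (List ℕ) :=
  {A | ∃ m < s, A ∈ minMaxPerms lo (m + 1)}

theorem minMaxPermsUpTo_zero (lo : ℕ) : minMaxPermsUpTo lo 0 = ∅ := by
  simp [minMaxPermsUpTo]

theorem minMaxPermsUpTo_succ (lo s : ℕ) :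
    minMaxPermsUpTo lo (s + 1) = minMaxPermsUpTo lo s ∪ minMaxPerms lo (s + 1) := by
  ext A
  simp only [minMaxPermsUpTo, Set.mem_union, Set.mem_ofPred_eq, Nat.lt_succ_iff_lt_or_eq,
    or_and_right, exists_or, exists_eq_left]

theorem encard_minMaxPermsUpTo (lo s : ℕ) : (minMaxPermsUpTo lo s).encard = (2 ^ s - 1 : ℕ) := by
  induction s with
  | zero => simp [minMaxPermsUpTo_zero]
  | succ s ih =>
    have hdisj : Disjoint (minMaxPermsUpTo lo s) (minMaxPerms lo (s + 1)) := by
      rw [Set.disjoint_left]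
      rintro A ⟨m, hm, hA⟩ hA'
      have := (length_of_mem_minMaxPerms hA).symm.trans (length_of_mem_minMaxPerms hA')
      omega
    rw [minMaxPermsUpTo_succ, Set.encard_union_eq hdisj, ih, encard_minMaxPerms]
    norm_cast
    have := Nat.one_le_two_pow (n := s)
    rw [pow_succ]
    omega

/-! ### Permutations starting above their minimum -/

variable {k : ℕ}

/-- The entries of `t` above `k` form a decreasing final segment of `t`. -/
def DescendsAbove (k : ℕ) (t : List ℕ) : Prop :=
  t.Pairwise fun u v => k < u → k < v ∧ v < u

theorem descendsAbove_append {A D : List ℕ} (hA : ∀ a ∈ A, a < k) (hD : ∀ d ∈ D, k < d)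
    (hdec : D.Pairwise (· > ·)) : DescendsAbove k (A ++ D) :=
  pairwise_append.mpr ⟨pairwise_iff_forall_sublist.mpr fun {u v} huv hu =>
      absurd (hA u (huv.subset (by simp : u ∈ [u, v]))) (by omega),
    hdec.imp_of_mem fun _ hv h _ => ⟨hD _ hv, h⟩, fun a ha _ _ h => absurd (hA a ha) (by omega)⟩

theorem avoids231_2134_4213_cons_of_descendsAbove (hk : k ∉ t) (hd : DescendsAbove k t)
    (h213 : Avoids213 (t.filter (· < k))) (h231 : Avoids231 (t.filter (· < k))) :
    Avoids231_2134_4213 (k :: t) := by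
  have hpair : ∀ {u v}, [u, v] <+ t → k < u → k < v ∧ v < u := pairwise_iff_forall_sublist.mp hd
  have hne : ∀ {u}, u ∈ t → u ≠ k := fun hu hu' => hk (hu' ▸ hu)
  have hsmall : ∀ {x y z}, [x, y, z] <+ t → x < k → y < k → z < k →
      [x, y, z] <+ t.filter (· < k) := fun hs hx hy hz => by
    simpa [hx, hy, hz] using hs.filter (· < k)
  refine ⟨fun x y z hs hxyz => ?_, fun w x y z hs hwxyz => ?_, fun w x y z hs hwxyz => ?_⟩
  · rcases cons_sublist_cons_cases hs with hs | ⟨rfl, hl⟩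
    · have hx := hne (hs.subset (by simp : x ∈ [x, y, z]))
      have hy := hne (hs.subset (by simp : y ∈ [x, y, z]))
      by_cases hkx : k < x
      · exact absurd (hpair ((by simp : [x, y] <+ [x, y, z]).trans hs) hkx).2 (by omega)
      by_cases hky : k < y
      · exact absurd (hpair ((by simp : [y, z] <+ [x, y, z]).trans hs) hky).1 (by omega)
      exact h231 x y z (hsmall hs (by omega) (by omega) (by omega)) hxyz
    · exact absurd (hpair hl hxyz.2).1 (by omega)
  · rcases cons_sublist_cons_cases hs with hs | ⟨rfl, hl⟩
    · have hy := hne (hs.subset (by simp : y ∈ [w, x, y, z]))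
      by_cases hky : k < y
      · exact absurd (hpair ((by simp : [y, z] <+ [w, x, y, z]).trans hs) hky).2 (by omega)
      exact h213 w x y (hsmall ((by simp : [w, x, y] <+ [w, x, y, z]).trans hs)
        (by omega) (by omega) (by omega)) ⟨hwxyz.1, hwxyz.2.1⟩
    · exact absurd (hpair ((by simp : [y, z] <+ [x, y, z]).trans hl) hwxyz.2.1).2 (by omega)
  · rcases cons_sublist_cons_cases hs with hs | ⟨rfl, hl⟩
    · have hz := hne (hs.subset (by simp : z ∈ [w, x, y, z]))
      by_cases hkz : k < z
      · have hkx := (hpair ((by simp : [w, x] <+ [w, x, y, z]).trans hs) (by omega)).1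
        exact absurd (hpair ((by simp : [x, z] <+ [w, x, y, z]).trans hs) hkx).2 (by omega)
      exact h213 x y z (hsmall ((by simp : [x, y, z] <+ [w, x, y, z]).trans hs)
        (by omega) (by omega) (by omega)) ⟨hwxyz.1, hwxyz.2.1⟩
    · exact h213 x y z (hsmall hl (by omega) (by omega) (by omega)) ⟨hwxyz.1, hwxyz.2.1⟩

theorem descendsAbove_of_avoids231_2134_4213_cons (h : Avoids231_2134_4213 (k :: t))
    (hnd : (k :: t).Nodup) (hlo : ∃ x ∈ t, x < k) : DescendsAbove k t := by
  obtain ⟨hk, hnd⟩ := nodup_cons.mp hnd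
  have hne : ∀ {u}, u ∈ t → u ≠ k := fun hu hu' => hk (hu' ▸ hu)
  have hup : ∀ {u v}, [u, v] <+ t → k < u → k < v := fun {u v} huv hu => by
    have hv := hne (huv.subset (by simp : v ∈ [u, v]))
    by_contra hv'
    exact h.avoids231 k u v (huv.cons_cons k) ⟨by omega, hu⟩
  obtain ⟨y, hy, hyk⟩ := hlo
  obtain ⟨x, t, rfl⟩ := exists_cons_of_ne_nil (ne_nil_of_mem hy)
  have hx : x < k := by
    rcases mem_cons.mp hy with rfl | hy
    · exact hyk
    · have := hne (mem_cons_self : x ∈ x :: t)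
      by_contra
      have := hup ((singleton_sublist.mpr hy).cons_cons x) (by omega)
      omega
  refine pairwise_iff_forall_sublist.mpr fun {u v} huv hu => ⟨hup huv hu, ?_⟩
  have huv' : [u, v] <+ t := by
    rcases cons_sublist_cons_cases huv with huv | ⟨rfl, -⟩
    · exact huv
    · omega
  have hne' : u ≠ v := pairwise_iff_forall_sublist.mp hnd.of_cons huv'
  by_contra
  -- the first entry `x` is below `k`, so `k, x, u, v` would be a `2134`
  exact h.avoids2134 k x u v ((huv'.cons_cons x).cons_cons k) ⟨hx, hu, by omega⟩

theorem Avoids4213.avoids213_filter_lt (h : Avoids4213 (k :: t)) :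
    Avoids213 (t.filter (· < k)) := fun x y z hs hxyz =>
  h k x y z ((hs.trans (filter_sublist)).cons_cons k)
    ⟨hxyz.1, hxyz.2, by simpa using (mem_filter.mp (hs.subset (by simp : z ∈ [x, y, z]))).2⟩

theorem filter_lt_append_filter_gt_of_descendsAbove (hk : k ∉ t) (hd : DescendsAbove k t) :
    t.filter (· < k) ++ t.filter (k < ·) = t := by
  induction t with
  | nil => rfl
  | cons x t ih =>
    rw [DescendsAbove, pairwise_cons] at hd
    have hxk : x ≠ k := fun h => hk (h ▸ mem_cons_self)
    by_cases hx : k < x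
    · have hgt : ∀ y ∈ x :: t, k < y := forall_mem_cons.mpr ⟨hx, fun y hy => (hd.1 y hy hx).1⟩
      rw [filter_eq_nil_iff.mpr fun y hy => by simpa using (hgt y hy).le,
        filter_eq_self.mpr fun y hy => by simpa using hgt y hy, nil_append]
    · simp [show x < k by omega, hx, ih (fun h => hk (mem_cons_of_mem x h)) hd.2]

def avoidingPerms (lo s : ℕ) : Set (List ℕ) :=
  {w | w ~ range' lo s ∧ Avoids231_2134_4213 w}

/-- `k, A, lo + s, lo + s - 1, …, k + 1` with `k = lo + A.length`; a permutation of `[lo, lo + s]`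
when `A` is one of `[lo, k)`. -/
def peakWord (lo s : ℕ) (A : List ℕ) : List ℕ :=
  (lo + A.length) :: (A ++ (range' (lo + A.length + 1) (s - A.length)).reverse)

section

variable {lo s : ℕ}

theorem peakWord_injective : Function.Injective (peakWord lo s) := by
  intro A B h
  have hlen : A.length = B.length := by have := (cons.inj h).1; omega
  exact (append_inj (cons.inj h).2 hlen).1

theorem peakWord_mem_avoidingPerms {A : List ℕ} (hA : A ∈ minMaxPermsUpTo lo s) :
    peakWord lo s A ∈ avoidingPerms lo (s + 1) := by
  obtain ⟨m, hm, hA⟩ := hA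
  have hlen := length_of_mem_minMaxPerms hA
  obtain ⟨hperm, h213, h231⟩ := hA
  set k := lo + A.length
  set D := (range' (k + 1) (s - A.length)).reverse
  have hAk : ∀ a ∈ A, a < k := fun a ha => by
    have := bounds_of_mem_of_perm_range' hperm ha; omega
  have hDk : ∀ d ∈ D, k < d := fun d hd => by
    have := mem_range'_1.mp (mem_reverse.mp hd); omega
  have hkAD : k ∉ A ++ D := fun h => by
    rcases mem_append.mp h with h | h
    · exact (hAk k h).false
    · exact (hDk k h).false
  refine ⟨perm_range'_iff.mpr ⟨nodup_cons.mpr ⟨hkAD, nodup_append.mpr ⟨hperm.nodup_iff.mpr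
    nodup_range', nodup_reverse.mpr nodup_range', fun a ha d hd => ?_⟩⟩, fun x => ?_⟩, ?_⟩
  · have := hAk a ha; have := hDk d hd; omega
  · simp only [peakWord, mem_cons, mem_append, hperm.mem_iff, mem_range'_1, mem_reverse]
    omega
  have hd := descendsAbove_append hAk hDk (pairwise_reverse.mpr pairwise_lt_range')
  have hfilter : (A ++ D).filter (· < k) = A := by
    rw [filter_append, filter_eq_self.mpr fun a ha => by simpa using hAk a ha,
      filter_eq_nil_iff.mpr fun d hd => by simpa using (hDk d hd).le, append_nil]
  have := avoids231_2134_4213_cons_of_descendsAbove hkAD hd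
  rw [hfilter] at this
  exact this h213 h231

theorem exists_peakWord_eq_of_cons_mem_avoidingPerms (h : k :: t ∈ avoidingPerms lo (s + 1))
    (hk : lo < k) :
    ∃ A ∈ minMaxPermsUpTo lo s, peakWord lo s A = k :: t := by
  obtain ⟨hperm, hav⟩ := h
  obtain ⟨hnd, hmem⟩ := perm_range'_iff.mp hperm
  have hkt := (nodup_cons.mp hnd).1
  have hks := (hmem k).mp mem_cons_self
  have hmem_t : ∀ x, x ∈ t ↔ lo ≤ x ∧ x < lo + (s + 1) ∧ x ≠ k := fun x => by
    rw [← and_assoc, ← hmem x, mem_cons]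
    exact ⟨fun hx => ⟨Or.inr hx, fun h => hkt (h ▸ hx)⟩, fun ⟨hx, hxk⟩ => hx.resolve_left hxk⟩
  have hd := descendsAbove_of_avoids231_2134_4213_cons hav hnd
    ⟨lo, (hmem_t lo).mpr ⟨le_rfl, by omega, by omega⟩, hk⟩
  have hA : t.filter (· < k) ~ range' lo (k - lo) := perm_range'_iff.mpr
    ⟨hnd.of_cons.filter _, fun x => by simp only [mem_filter, hmem_t, decide_eq_true_eq]; omega⟩
  have hB : t.filter (k < ·) = (range' (k + 1) (lo + s - k)).reverse :=
    eq_reverse_range'_of_perm_of_pairwise_gt (perm_range'_iff.mpr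
      ⟨hnd.of_cons.filter _, fun x => by simp only [mem_filter, hmem_t, decide_eq_true_eq]; omega⟩)
      ((hd.sublist filter_sublist).imp_of_mem fun hu _ h =>
        (h (by simpa using (mem_filter.mp hu).2)).2)
  have hlen : (t.filter (· < k)).length = k - lo := by simpa using hA.length_eq
  refine ⟨t.filter (· < k), ⟨k - lo - 1, by omega, ?_⟩, ?_⟩
  · rw [show k - lo - 1 + 1 = k - lo by omega]
    exact ⟨hA, hav.avoids4213.avoids213_filter_lt,
      hav.avoids231.sublist (filter_sublist.trans (sublist_cons_self k t))⟩
  · rw [peakWord, hlen, show lo + (k - lo) = k by omega, show s - (k - lo) = lo + s - k by omega,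
      ← hB, filter_lt_append_filter_gt_of_descendsAbove hkt hd]

end

/-! ### Counting -/

theorem avoidingPerms_zero (lo : ℕ) : avoidingPerms lo 0 = {[]} := by
  ext w
  simp only [avoidingPerms, range'_zero, perm_nil, Set.mem_singleton_iff, Set.mem_ofPred_eq,
    and_iff_left_iff_imp]
  rintro rfl
  exact ⟨fun _ _ _ hs => by simp at hs, fun _ _ _ _ hs => by simp at hs,
    fun _ _ _ _ hs => by simp at hs⟩

theorem avoidingPerms_succ (lo s : ℕ) :
    avoidingPerms lo (s + 1) =
      (lo :: ·) '' avoidingPerms (lo + 1) s ∪ peakWord lo s '' minMaxPermsUpTo lo s := by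
  ext w
  constructor
  · intro hw
    obtain ⟨k, t, rfl⟩ := exists_cons_of_length_eq_add_one (by simpa using hw.1.length_eq)
    rcases (bounds_of_mem_of_perm_range' hw.1 mem_cons_self).1.eq_or_lt with rfl | hk
    · exact Or.inl ⟨t, ⟨cons_perm_range'_succ_iff.mp hw.1, hw.2.sublist (sublist_cons_self _ _)⟩,
        rfl⟩
    · exact Or.inr (exists_peakWord_eq_of_cons_mem_avoidingPerms hw hk)
  · rintro (⟨t, ⟨hperm, hav⟩, rfl⟩ | ⟨A, hA, rfl⟩)
    · exact ⟨cons_perm_range'_succ_iff.mpr hperm,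
        hav.cons_of_forall_lt fun x hx => (bounds_of_mem_of_perm_range' hperm hx).1⟩
    · exact peakWord_mem_avoidingPerms hA

theorem encard_avoidingPerms (s : ℕ) : ∀ lo, (avoidingPerms lo s).encard = (2 ^ s - s : ℕ) := by
  induction s with
  | zero => simp [avoidingPerms_zero]
  | succ s ih =>
    intro lo
    have hdisj : Disjoint ((lo :: ·) '' avoidingPerms (lo + 1) s)
        (peakWord lo s '' minMaxPermsUpTo lo s) := by
      rw [Set.disjoint_left]
      rintro _ ⟨t, -, rfl⟩ ⟨A, ⟨m, -, hA⟩, h⟩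
      have := (cons.inj h).1
      have := length_of_mem_minMaxPerms hA
      omega
    rw [avoidingPerms_succ, Set.encard_union_eq hdisj, cons_injective.encard_image,
      peakWord_injective.encard_image, ih, encard_minMaxPermsUpTo, ← Nat.cast_add, pow_succ]
    have := Nat.lt_two_pow_self (n := s)
    congr 1
    omega

theorem setOf_isCirc_not_cContains_1342 (s : ℕ) :
    {l : List ℕ | IsCirc (s + 1) l ∧ ¬ CContains l [1, 3, 4, 2]} =
      (1 :: ·) '' avoidingPerms 2 s := by
  have hgt : ∀ {t : List ℕ}, t ~ range' 2 s → ∀ x ∈ t, 1 < x := fun ht x hx =>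
    (bounds_of_mem_of_perm_range' ht hx).1
  ext l
  constructor
  · rintro ⟨⟨hperm, hhead⟩, hc⟩
    obtain ⟨t, rfl⟩ : ∃ t, l = 1 :: t := by
      cases l with
      | nil => simp at hhead
      | cons a t => exact ⟨t, by simpa using hhead⟩
    have ht := cons_perm_range'_succ_iff.mp hperm
    exact ⟨t, ⟨ht, (not_cContains_1342_cons_iff (hgt ht)).mp hc⟩, rfl⟩
  · rintro ⟨t, ⟨ht, hav⟩, rfl⟩
    exact ⟨⟨cons_perm_range'_succ_iff.mpr ht, rfl⟩, (not_cContains_1342_cons_iff (hgt ht)).mpr hav⟩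

end Circ1342

open Circ1342

/-- For `n ≥ 2`, the number of circular permutations of `[n]` avoiding the
circular pattern `[1342]` is `2^(n-1) - (n-1)`. -/
theorem avoid_1342_count (n : ℕ) (hn : 2 ≤ n) :
    {l : List ℕ | IsCirc n l ∧ ¬ CContains l [1, 3, 4, 2]}.ncard
      = 2 ^ (n - 1) - (n - 1) := by
  obtain ⟨s, rfl⟩ : ∃ s, n = s + 1 := ⟨n - 1, by omega⟩
  rw [setOf_isCirc_not_cContains_1342, Set.ncard_image_of_injective _ List.cons_injective,
    Set.ncard_def, encard_avoidingPerms, ENat.toNat_natCast, Nat.add_sub_cancel]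
end

section
/- For k ≥ 1 and n ≥ k, the number of permutations of [n+1] avoiding all three patterns 213, 231, and the increasing pattern 12⋯(k+1) equals the sum over i from 0 to k-1 of binomial(n, i). -/
theorem LContains.mono {σ σ' π : List ℕ} (h : σ.Sublist σ') : LContains σ π → LContains σ' π
  | ⟨t, ht, hiso⟩ => ⟨t, ht.trans h, hiso⟩

theorem isoTo_213_iff {a b c : ℕ} : IsoTo [a, b, c] [2, 1, 3] ↔ b < a ∧ a < c := by
  refine ⟨fun h => ⟨?_, ?_⟩, fun h => ⟨rfl, fun i j hi hj => ?_⟩⟩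
  · simpa using (h.2 1 0 (by simp) (by simp)).2 (by simp)
  · simpa using (h.2 0 2 (by simp) (by simp)).2 (by simp)
  · simp only [List.length_cons, List.length_nil] at hi hj
    interval_cases i <;> interval_cases j <;> simp <;> omega

theorem isoTo_231_iff {a b c : ℕ} : IsoTo [a, b, c] [2, 3, 1] ↔ c < a ∧ a < b := by
  refine ⟨fun h => ⟨?_, ?_⟩, fun h => ⟨rfl, fun i j hi hj => ?_⟩⟩
  · simpa using (h.2 2 0 (by simp) (by simp)).2 (by simp)
  · simpa using (h.2 0 1 (by simp) (by simp)).2 (by simp)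
  · simp only [List.length_cons, List.length_nil] at hi hj
    interval_cases i <;> interval_cases j <;> simp <;> omega

theorem lContains_213_iff {σ : List ℕ} :
    LContains σ [2, 1, 3] ↔ ∃ a b c, [a, b, c].Sublist σ ∧ b < a ∧ a < c := by
  constructor
  · rintro ⟨t, hσ, hiso⟩
    obtain ⟨a, b, c, rfl⟩ := List.length_eq_three.1 hiso.1
    exact ⟨a, b, c, hσ, isoTo_213_iff.1 hiso⟩
  · rintro ⟨a, b, c, hσ, hba, hac⟩
    exact ⟨_, hσ, isoTo_213_iff.2 ⟨hba, hac⟩⟩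

theorem lContains_231_iff {σ : List ℕ} :
    LContains σ [2, 3, 1] ↔ ∃ a b c, [a, b, c].Sublist σ ∧ c < a ∧ a < b := by
  constructor
  · rintro ⟨t, hσ, hiso⟩
    obtain ⟨a, b, c, rfl⟩ := List.length_eq_three.1 hiso.1
    exact ⟨a, b, c, hσ, isoTo_231_iff.1 hiso⟩
  · rintro ⟨a, b, c, hσ, hca, hab⟩
    exact ⟨_, hσ, isoTo_231_iff.2 ⟨hca, hab⟩⟩

theorem isoTo_range'_one_iff {t : List ℕ} {m : ℕ} :
    IsoTo t (List.range' 1 m) ↔ t.Pairwise (· < ·) ∧ t.length = m := by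
  rw [← List.sortedLT_iff_pairwise]
  constructor
  · rintro ⟨hlen, h⟩
    rw [List.length_range'] at hlen
    refine ⟨List.sortedLT_iff_getElem_lt_getElem_of_lt.2 fun i j hi hj hij => ?_, hlen⟩
    simpa [List.getD_eq_getElem, hi, hj, hlen ▸ hi, hlen ▸ hj, hij] using (h i j hi hj).2
  · rintro ⟨hsort, rfl⟩
    refine ⟨by simp, fun i j hi hj => ?_⟩
    simp [hi, hj, hsort.getElem_lt_getElem_iff]

theorem lContains_range'_one_iff {σ : List ℕ} {m : ℕ} :
    LContains σ (List.range' 1 m) ↔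
      ∃ t : List ℕ, t.Sublist σ ∧ t.Pairwise (· < ·) ∧ t.length = m := by
  simp only [LContains, isoTo_range'_one_iff]

theorem List.pair_sublist_or_of_mem {α : Type*} {l : List α} {a b : α} (ha : a ∈ l) (hb : b ∈ l)
    (hab : a ≠ b) : [a, b].Sublist l ∨ [b, a].Sublist l := by
  induction l with
  | nil => simp at ha
  | cons x l ih =>
    rcases List.mem_cons.1 ha with rfl | ha' <;> rcases List.mem_cons.1 hb with rfl | hb'
    · exact absurd rfl hab
    · exact .inl ((List.singleton_sublist.2 hb').cons_cons a)
    · exact .inr ((List.singleton_sublist.2 ha').cons_cons b)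
    · exact (ih ha' hb').imp (·.cons x) (·.cons x)

theorem avoids_213_231_cons {a : ℕ} {l : List ℕ} (h213 : ¬ LContains l [2, 1, 3])
    (h231 : ¬ LContains l [2, 3, 1]) (ha : (∀ b ∈ l, a < b) ∨ ∀ b ∈ l, b < a) :
    ¬ LContains (a :: l) [2, 1, 3] ∧ ¬ LContains (a :: l) [2, 3, 1] := by
  have hbetween {y z : ℕ} (hs : [y, z].Sublist l) : ¬ (y < a ∧ a < z ∨ z < a ∧ a < y) := by
    have hy : y ∈ l := hs.subset (by simp)
    have hz : z ∈ l := hs.subset (by simp)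
    rcases ha with ha | ha <;> have := ha y hy <;> have := ha z hz <;> omega
  rw [lContains_213_iff] at h213 ⊢
  rw [lContains_231_iff] at h231 ⊢
  constructor
  · rintro ⟨x, y, z, hs, hyx, hxz⟩
    obtain hs | ⟨r, hr, hs⟩ := List.sublist_cons_iff.1 hs
    · exact h213 ⟨x, y, z, hs, hyx, hxz⟩
    · obtain ⟨rfl, rfl⟩ := List.cons_eq_cons.1 hr
      exact hbetween hs (.inl ⟨hyx, hxz⟩)
  · rintro ⟨x, y, z, hs, hzx, hxy⟩
    obtain hs | ⟨r, hr, hs⟩ := List.sublist_cons_iff.1 hs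
    · exact h231 ⟨x, y, z, hs, hzx, hxy⟩
    · obtain ⟨rfl, rfl⟩ := List.cons_eq_cons.1 hr
      exact hbetween hs (.inr ⟨hzx, hxy⟩)

theorem head_extreme_of_avoids_213_231 {a : ℕ} {l : List ℕ} (ha : a ∉ l)
    (h213 : ¬ LContains (a :: l) [2, 1, 3]) (h231 : ¬ LContains (a :: l) [2, 3, 1]) :
    (∀ b ∈ l, a < b) ∨ ∀ b ∈ l, b < a := by
  by_contra! ⟨⟨b, hb, hba⟩, ⟨c, hc, hac⟩⟩
  have hba : b < a := lt_of_le_of_ne hba (by rintro rfl; exact ha hb)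
  have hac : a < c := lt_of_le_of_ne hac (by rintro rfl; exact ha hc)
  rcases List.pair_sublist_or_of_mem hb hc (by omega) with hs | hs
  · exact h213 (lContains_213_iff.2 ⟨a, b, c, hs.cons_cons a, hba, hac⟩)
  · exact h231 (lContains_231_iff.2 ⟨a, c, b, hs.cons_cons a, hba, hac⟩)

def minMaxList (lo : ℕ) : List Bool → List ℕ
  | [] => [lo]
  | true :: c => lo :: minMaxList (lo + 1) c
  | false :: c => (lo + c.length + 1) :: minMaxList lo c

theorem minMaxList_perm (lo : ℕ) (c : List Bool) :
    (minMaxList lo c).Perm (List.range' lo (c.length + 1)) := by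
  induction c generalizing lo with
  | nil => simp [minMaxList]
  | cons b c ih =>
    cases b
    · rw [minMaxList, List.length_cons, List.range'_1_concat, ← add_assoc]
      exact ((ih lo).cons _).trans (List.perm_append_singleton _ _).symm
    · rw [minMaxList, List.length_cons, List.range'_succ]
      exact (ih (lo + 1)).cons lo

theorem mem_minMaxList {lo y : ℕ} {c : List Bool} :
    y ∈ minMaxList lo c ↔ lo ≤ y ∧ y ≤ lo + c.length := by
  rw [(minMaxList_perm lo c).mem_iff, List.mem_range'_1]
  omega

theorem minMaxList_avoids_213_231 (lo : ℕ) (c : List Bool) :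
    ¬ LContains (minMaxList lo c) [2, 1, 3] ∧ ¬ LContains (minMaxList lo c) [2, 3, 1] := by
  induction c generalizing lo with
  | nil =>
    refine avoids_213_231_cons ?_ ?_ (by simp) <;>
      exact fun ⟨t, ht, hiso⟩ => by simpa [List.sublist_nil.1 ht] using hiso.1
  | cons b c ih =>
    cases b
    · refine avoids_213_231_cons (ih lo).1 (ih lo).2 (.inr fun y hy => ?_)
      have := mem_minMaxList.1 hy
      omega
    · refine avoids_213_231_cons (ih (lo + 1)).1 (ih (lo + 1)).2 (.inl fun y hy => ?_)
      have := mem_minMaxList.1 hy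
      omega

theorem eq_of_cons_perm_range'_of_forall_lt {a lo m : ℕ} {l : List ℕ}
    (h : (a :: l).Perm (List.range' lo (m + 1))) (hmin : ∀ b ∈ l, a < b) : a = lo := by
  have hle : lo ≤ a := (List.mem_range'_1.1 (h.mem_iff.1 List.mem_cons_self)).1
  have hlo : lo ∈ a :: l := h.mem_iff.2 (List.mem_range'_1.2 (by omega))
  rcases List.mem_cons.1 hlo with hlo | hlo
  · exact hlo.symm
  · exact absurd (hmin lo hlo) (by omega)

theorem eq_of_cons_perm_range'_of_forall_gt {a lo m : ℕ} {l : List ℕ}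
    (h : (a :: l).Perm (List.range' lo (m + 1))) (hmax : ∀ b ∈ l, b < a) : a = lo + m := by
  have hlt : a < lo + (m + 1) := (List.mem_range'_1.1 (h.mem_iff.1 List.mem_cons_self)).2
  have hhi : lo + m ∈ a :: l := h.mem_iff.2 (List.mem_range'_1.2 (by omega))
  rcases List.mem_cons.1 hhi with hhi | hhi
  · exact hhi.symm
  · exact absurd (hmax (lo + m) hhi) (by omega)

theorem exists_eq_minMaxList {m lo : ℕ} {σ : List ℕ} (hσ : σ.Perm (List.range' lo (m + 1)))
    (h213 : ¬ LContains σ [2, 1, 3]) (h231 : ¬ LContains σ [2, 3, 1]) :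
    ∃ c : List Bool, c.length = m ∧ σ = minMaxList lo c := by
  induction m generalizing lo σ with
  | zero => exact ⟨[], rfl, by simpa [minMaxList] using hσ⟩
  | succ m ih =>
    obtain ⟨a, l, rfl⟩ :=
      List.exists_cons_of_length_eq_add_one (n := m + 1) (by simpa using hσ.length_eq)
    have ha : a ∉ l := (List.nodup_cons.1 (hσ.nodup_iff.2 List.nodup_range')).1
    have h213' : ¬ LContains l [2, 1, 3] := mt (LContains.mono (List.sublist_cons_self a l)) h213
    have h231' : ¬ LContains l [2, 3, 1] := mt (LContains.mono (List.sublist_cons_self a l)) h231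
    rcases head_extreme_of_avoids_213_231 ha h213 h231 with hmin | hmax
    · obtain rfl := eq_of_cons_perm_range'_of_forall_lt hσ hmin
      have hl : l.Perm (List.range' (a + 1) (m + 1)) := by
        rw [← List.perm_cons a, ← List.range'_succ]
        exact hσ
      obtain ⟨c, rfl, rfl⟩ := ih hl h213' h231'
      exact ⟨true :: c, rfl, rfl⟩
    · obtain rfl := eq_of_cons_perm_range'_of_forall_gt hσ hmax
      have hl : l.Perm (List.range' lo (m + 1)) := by
        rw [← List.perm_cons (lo + (m + 1))]
        refine hσ.trans ?_
        rw [List.range'_1_concat]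
        exact List.perm_append_singleton _ _
      obtain ⟨c, rfl, rfl⟩ := ih hl h213' h231'
      exact ⟨false :: c, rfl, by simp [minMaxList, add_assoc]⟩

theorem length_le_of_sublist_minMaxList {lo : ℕ} {c : List Bool} {t : List ℕ}
    (ht : t.Sublist (minMaxList lo c)) (hinc : t.Pairwise (· < ·)) :
    t.length ≤ c.count true + 1 := by
  induction c generalizing lo t with
  | nil => simpa [minMaxList] using ht.length_le
  | cons b c ih =>
    cases b <;> rw [minMaxList] at ht <;> rcases List.sublist_cons_iff.1 ht with ht | ⟨r, rfl, hr⟩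
    · simpa using ih ht hinc
    · obtain rfl : r = [] := List.eq_nil_iff_forall_not_mem.2 fun y hy => by
        have := (List.pairwise_cons.1 hinc).1 y hy
        have := mem_minMaxList.1 (hr.subset hy)
        omega
      simp
    · simpa using (ih ht hinc).trans (Nat.le_succ _)
    · simpa using ih hr hinc.of_cons

theorem exists_sublist_minMaxList (lo : ℕ) (c : List Bool) :
    ∃ t : List ℕ, t.Sublist (minMaxList lo c) ∧ t.Pairwise (· < ·) ∧
      t.length = c.count true + 1 := by
  induction c generalizing lo with
  | nil => exact ⟨[lo], .refl _, by simp, rfl⟩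
  | cons b c ih =>
    cases b
    · obtain ⟨t, ht, hinc, hlen⟩ := ih lo
      exact ⟨t, ht.cons _, hinc, by simpa using hlen⟩
    · obtain ⟨t, ht, hinc, hlen⟩ := ih (lo + 1)
      refine ⟨lo :: t, ht.cons_cons lo, List.pairwise_cons.2 ⟨fun y hy => ?_, hinc⟩,
        by simpa using hlen⟩
      have := mem_minMaxList.1 (ht.subset hy)
      omega

theorem lContains_range'_one_minMaxList_iff {lo m : ℕ} {c : List Bool} :
    LContains (minMaxList lo c) (List.range' 1 m) ↔ m ≤ c.count true + 1 := by
  rw [lContains_range'_one_iff]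
  constructor
  · rintro ⟨t, ht, hinc, rfl⟩
    exact length_le_of_sublist_minMaxList ht hinc
  · intro hm
    obtain ⟨t, ht, hinc, hlen⟩ := exists_sublist_minMaxList lo c
    exact ⟨t.take m, (t.take_sublist m).trans ht, hinc.sublist (t.take_sublist m),
      by simp [hlen, hm]⟩

theorem length_minMaxList (lo : ℕ) (c : List Bool) : (minMaxList lo c).length = c.length + 1 := by
  simpa using (minMaxList_perm lo c).length_eq

theorem minMaxList_injective (lo : ℕ) : Function.Injective (minMaxList lo) := by
  intro c c' h
  induction c generalizing lo c' with
  | nil => simpa [length_minMaxList, eq_comm] using congrArg List.length h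
  | cons b c ih =>
    cases c' with
    | nil => simpa [length_minMaxList] using congrArg List.length h
    | cons b' c' =>
      cases b <;> cases b' <;> simp only [minMaxList, List.cons.injEq] at h
      · rw [ih _ h.2]
      · omega
      · omega
      · rw [ih _ h.2]

open scoped Finset

theorem Finset.card_filter_card_lt {α : Type*} [Fintype α] (k : ℕ) :
    #{s : Finset α | #s < k} = ∑ i ∈ Finset.range k, (Fintype.card α).choose i := by
  rw [Finset.card_eq_sum_card_fiberwise (f := Finset.card) (t := Finset.range k)
    (by intro s hs; simpa using hs)]
  refine Finset.sum_congr rfl fun i hi => ?_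
  have hfiber (s : Finset α) : #s < k ∧ #s = i ↔ #s = i := by
    simp only [Finset.mem_range] at hi
    omega
  simp only [Finset.filter_filter, hfiber, ← Finset.powerset_univ, ← Finset.powersetCard_eq_filter,
    Finset.card_powersetCard, Finset.card_univ]

theorem ncard_length_eq_count_true_lt (n k : ℕ) :
    {c : List Bool | c.length = n ∧ c.count true < k}.ncard = ∑ i ∈ Finset.range k, n.choose i := by
  let e (s : Finset (Fin n)) : List Bool := List.ofFn fun i => decide (i ∈ s)
  have he : Function.Injective e := fun s t h => by
    ext i
    simpa using congrFun (List.ofFn_injective h) i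
  have hcount (s : Finset (Fin n)) : (e s).count true = #s := by
    rw [show e s = (List.Vector.ofFn fun i => decide (i ∈ s)).toList from
      (List.Vector.toList_ofFn _).symm, ← Fin.card_filter_univ_eq_vector_get_eq_count]
    simp
  have himage : {c : List Bool | c.length = n ∧ c.count true < k} =
      e '' {s : Finset (Fin n) | #s < k} := by
    ext c
    constructor
    · rintro ⟨rfl, hc⟩
      have hec : e {i | c.get i} = c := by simp [e]
      refine ⟨_, ?_, hec⟩
      rw [Set.mem_ofPred, ← hcount, hec]
      exact hc
    · rintro ⟨s, hs, rfl⟩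
      exact ⟨List.length_ofFn, by simpa [hcount] using hs⟩
  rw [himage, Set.ncard_image_of_injective _ he, Set.ncard_eq_toFinset_card', Set.toFinset_ofPred,
    Finset.card_filter_card_lt, Fintype.card_fin]

theorem avoid_213_231_iota_count_general (k n : ℕ) :
    {l : List ℕ | l.Perm (List.range' 1 (n + 1)) ∧ ¬ LContains l [2, 1, 3] ∧
      ¬ LContains l [2, 3, 1] ∧ ¬ LContains l (List.range' 1 (k + 1))}.ncard
      = ∑ i ∈ Finset.range k, n.choose i := by
  have hset : {l : List ℕ | l.Perm (List.range' 1 (n + 1)) ∧ ¬ LContains l [2, 1, 3] ∧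
      ¬ LContains l [2, 3, 1] ∧ ¬ LContains l (List.range' 1 (k + 1))} =
      minMaxList 1 '' {c | c.length = n ∧ c.count true < k} := by
    ext σ
    constructor
    · rintro ⟨hσ, h213, h231, hinc⟩
      obtain ⟨c, rfl, rfl⟩ := exists_eq_minMaxList hσ h213 h231
      rw [lContains_range'_one_minMaxList_iff] at hinc
      exact ⟨c, ⟨rfl, by omega⟩, rfl⟩
    · rintro ⟨c, ⟨rfl, hc⟩, rfl⟩
      refine ⟨minMaxList_perm 1 c, minMaxList_avoids_213_231 1 c |>.1,
        minMaxList_avoids_213_231 1 c |>.2, ?_⟩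
      rw [lContains_range'_one_minMaxList_iff]
      omega
  rw [hset, Set.ncard_image_of_injective _ (minMaxList_injective 1),
    ncard_length_eq_count_true_lt]

/-- For `k ≥ 1` and `n ≥ k`, the number of permutations of `[n+1]` avoiding
`213`, `231`, and the increasing pattern `12⋯(k+1)` is `∑_{i=0}^{k-1} C(n,i)`. -/
theorem avoid_213_231_iota_count (k n : ℕ) (hk : 1 ≤ k) (hn : k ≤ n) :
    {l : List ℕ | l.Perm (List.range' 1 (n + 1)) ∧ ¬ LContains l [2, 1, 3] ∧
      ¬ LContains l [2, 3, 1] ∧ ¬ LContains l (List.range' 1 (k + 1))}.ncard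
      = ∑ i ∈ Finset.range k, n.choose i :=
  avoid_213_231_iota_count_general k n
end

section
/- For n ≥ 3, the number of circular permutations of [n] avoiding both [1342] and [1234] equals 2(n-2). -/
/-! A circular permutation of `[n]` is the list `1 :: r`. It contains `[1342]` or `[1234]` iff
some four of its entries, in order, compare like one of the eight rotations of these patterns.
Write `r = P ++ n :: S`. If `P ≠ []`, the quadruples `1 a b n`, `1 x n y`, `1 p a b` force `P`
and `S` to decrease with `P` below `S`: `1, k+1, …, 2, n, …, k+2`. If `P = []`, write
`S = Q ++ 2 :: T`; then `1 a b 2`, `1 2 a b`, `n x 2 y` force `Q` and `T` to decrease with `Q`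
above `T`: `1, n, …, j+3, 2, j+2, …, 3`. Conversely, in these lists every pair of entries compares
in a way that rules out all eight rotations, and each family has `n - 2` members. -/

open scoped List

lemma IsoTo.rotate {t p : List ℕ} (h : IsoTo t p) (m : ℕ) :
    IsoTo (t.rotate m) (p.rotate m) := by
  obtain ⟨hlen, h⟩ := h
  have getD_rotate : ∀ (l : List ℕ) i, i < l.length →
      (l.rotate m).getD i 0 = l.getD ((i + m) % l.length) 0 := by
    intro l i hi
    simp only [List.getD_eq_getElem?_getD, List.getElem?_rotate hi]
  refine ⟨by simp [hlen], fun i j hi hj => ?_⟩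
  rw [List.length_rotate] at hi hj
  rw [getD_rotate t i hi, getD_rotate t j hj, getD_rotate p i (hlen ▸ hi),
    getD_rotate p j (hlen ▸ hj), ← hlen]
  exact h _ _ (Nat.mod_lt _ (by omega)) (Nat.mod_lt _ (by omega))

namespace List

variable {α : Type*} {t l : List α}

theorem exists_rotate_sublist_of_sublist_rotate {k : ℕ} (h : t <+ l.rotate k) :
    ∃ m, t.rotate m <+ l := by
  rw [rotate_eq_drop_append_take_mod] at h
  obtain ⟨t₁, t₂, rfl, h₁, h₂⟩ := sublist_append_iff.1 h
  refine ⟨t₁.length, ?_⟩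
  rw [rotate_append_length_eq, ← take_append_drop (k % l.length) l]
  exact h₂.append h₁

theorem exists_rotate_sublist_rotate_of_sublist (h : t <+ l) (m : ℕ) :
    ∃ k, t.rotate m <+ l.rotate k := by
  rw [← take_append_drop (m % t.length) t] at h
  obtain ⟨l₁, l₂, rfl, h₁, h₂⟩ := append_sublist_iff.1 h
  refine ⟨l₁.length, ?_⟩
  rw [rotate_eq_drop_append_take_mod, rotate_append_length_eq]
  exact h₂.append h₁

end List

lemma cContains_iff_exists_lContains_rotate {l π : List ℕ} :
    CContains l π ↔ ∃ j, LContains l (π.rotate j) := by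
  constructor
  · rintro ⟨k, t, ht, hiso⟩
    obtain ⟨m, hm⟩ := List.exists_rotate_sublist_of_sublist_rotate ht
    exact ⟨m, _, hm, hiso.rotate m⟩
  · rintro ⟨j, t, ht, hiso⟩
    obtain ⟨m, hm⟩ : (π.rotate j).IsRotated π := List.IsRotated.symm ⟨j, rfl⟩
    obtain ⟨k, hk⟩ := List.exists_rotate_sublist_rotate_of_sublist ht m
    exact ⟨k, _, hk, hm ▸ hiso.rotate m⟩

lemma cContains_iff_of_length_eq_four {l π : List ℕ} (hπ : π.length = 4) :
    CContains l π ↔ ∃ a b c d, [a, b, c, d] <+ l ∧ ∃ j < 4, IsoTo [a, b, c, d] (π.rotate j) := by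
  rw [cContains_iff_exists_lContains_rotate]
  constructor
  · rintro ⟨j, t, ht, hiso⟩
    obtain ⟨a, b, c, d, rfl⟩ : ∃ a b c d, t = [a, b, c, d] := by
      match t, hiso.1 with
      | [a, b, c, d], _ => exact ⟨a, b, c, d, rfl⟩
      | [], h | [_], h | [_, _], h | [_, _, _], h | _ :: _ :: _ :: _ :: _ :: _, h =>
        simp [hπ] at h
    refine ⟨a, b, c, d, ht, j % 4, Nat.mod_lt _ (by norm_num), ?_⟩
    rwa [← hπ, List.rotate_mod]
  · rintro ⟨a, b, c, d, ht, j, -, hiso⟩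
    exact ⟨j, _, ht, hiso⟩

lemma isoTo_iff_forall_lt {t p : List ℕ} : IsoTo t p ↔ t.length = p.length ∧
    ∀ i < t.length, ∀ j < t.length, (t.getD i 0 < t.getD j 0 ↔ p.getD i 0 < p.getD j 0) :=
  and_congr_right fun _ => ⟨fun h i hi j hj => h i j hi hj, fun h i j hi hj => h i hi j hj⟩

-- The rotations of `1342`, then those of `1234`.
def Forbidden (a b c d : ℕ) : Prop :=
  (a < d ∧ d < b ∧ b < c) ∨ (d < c ∧ c < a ∧ a < b) ∨ (c < b ∧ b < d ∧ d < a) ∨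
    (b < a ∧ a < c ∧ c < d) ∨
  (a < b ∧ b < c ∧ c < d) ∨ (d < a ∧ a < b ∧ b < c) ∨ (c < d ∧ d < a ∧ a < b) ∨
    (b < c ∧ c < d ∧ d < a)

lemma forbidden_iff (a b c d : ℕ) : Forbidden a b c d ↔
    (∃ j < 4, IsoTo [a, b, c, d] ([1, 3, 4, 2].rotate j)) ∨
      ∃ j < 4, IsoTo [a, b, c, d] ([1, 2, 3, 4].rotate j) := by
  simp only [Nat.exists_lt_succ_left, Nat.not_lt_zero, false_and, exists_false, or_false,
    List.rotate_zero, show ([1, 3, 4, 2] : List ℕ).rotate 1 = [3, 4, 2, 1] from rfl,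
    show ([1, 3, 4, 2] : List ℕ).rotate 2 = [4, 2, 1, 3] from rfl,
    show ([1, 3, 4, 2] : List ℕ).rotate 3 = [2, 1, 3, 4] from rfl,
    show ([1, 2, 3, 4] : List ℕ).rotate 1 = [2, 3, 4, 1] from rfl,
    show ([1, 2, 3, 4] : List ℕ).rotate 2 = [3, 4, 1, 2] from rfl,
    show ([1, 2, 3, 4] : List ℕ).rotate 3 = [4, 1, 2, 3] from rfl,
    isoTo_iff_forall_lt, List.length_cons, List.length_nil, zero_add, Nat.forall_lt_succ_left,
    IsEmpty.forall_iff, forall_const, and_true, List.getD_cons_zero, List.getD_cons_succ]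
  norm_num
  simp only [or_assoc, Forbidden]
  repeat' apply or_congr
  all_goals omega

lemma avoids_iff_forall_not_forbidden (l : List ℕ) :
    ¬ CContains l [1, 3, 4, 2] ∧ ¬ CContains l [1, 2, 3, 4] ↔
      ∀ a b c d, [a, b, c, d] <+ l → ¬ Forbidden a b c d := by
  rw [cContains_iff_of_length_eq_four rfl, cContains_iff_of_length_eq_four rfl]
  simp only [forbidden_iff]
  grind

def desc (s k : ℕ) : List ℕ := (List.range' s k).reverse

lemma mem_desc {s k x : ℕ} : x ∈ desc s k ↔ s ≤ x ∧ x < s + k := by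
  simp [desc, List.mem_range'_1]

lemma pairwise_gt_desc (s k : ℕ) : (desc s k).Pairwise (· > ·) :=
  List.pairwise_reverse.2 (List.pairwise_lt_range' 1)

lemma length_desc (s k : ℕ) : (desc s k).length = k := by simp [desc]

lemma desc_succ (s k : ℕ) : desc s (k + 1) = (s + k) :: desc s k := by
  simp [desc, List.range'_concat]

lemma desc_add (s a b : ℕ) : desc s (a + b) = desc (a + s) b ++ desc s a := by
  rw [desc, ← List.range'_append, List.reverse_append, one_mul, add_comm]
  rfl

lemma desc_perm_range' (s k : ℕ) : desc s k ~ List.range' s k := List.reverse_perm _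

lemma eq_desc_of_perm {A B : List ℕ} {s : ℕ} (hgt : (A ++ B).Pairwise (· > ·))
    (hp : A ++ B ~ List.range' s (B.length + A.length)) :
    A = desc (B.length + s) A.length ∧ B = desc s B.length := by
  have h : A ++ B = desc s (B.length + A.length) :=
    List.Perm.eq_of_pairwise (fun _ _ _ _ h₁ h₂ => absurd h₁ (lt_asymm h₂)) hgt
      (pairwise_gt_desc _ _) (hp.trans (desc_perm_range' _ _).symm)
  rw [desc_add] at h
  exact List.append_inj h (length_desc _ _).symm

lemma pairwise_gt_of_nodup {L : List ℕ} (hL : L.Nodup) (h : ∀ a b, [a, b] <+ L → ¬ a < b) :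
    L.Pairwise (· > ·) :=
  List.pairwise_iff_forall_sublist.2 fun hab =>
    lt_of_le_of_ne (not_lt.1 (h _ _ hab)) (List.pairwise_iff_forall_sublist.1 hL hab).symm

def avoiderA (n k : ℕ) : List ℕ := 1 :: (desc 2 k ++ desc (k + 2) (n - 1 - k))

def avoiderB (n j : ℕ) : List ℕ := 1 :: (desc (j + 3) (n - 2 - j) ++ 2 :: desc 3 j)

lemma isCirc_one_cons_iff {n : ℕ} {r : List ℕ} (hn : 1 ≤ n) :
    IsCirc n (1 :: r) ↔ r ~ List.range' 2 (n - 1) := by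
  obtain ⟨m, rfl⟩ : ∃ m, n = m + 1 := ⟨n - 1, by omega⟩
  simp [IsCirc, List.range'_succ]

lemma isCirc_avoiderA {n k : ℕ} (hk : k < n) : IsCirc n (avoiderA n k) := by
  rw [avoiderA, isCirc_one_cons_iff (by omega)]
  refine List.perm_append_comm.trans ?_
  rw [← desc_add, show k + (n - 1 - k) = n - 1 by omega]
  exact desc_perm_range' _ _

lemma isCirc_avoiderB {n j : ℕ} (hj : j + 2 ≤ n) : IsCirc n (avoiderB n j) := by
  rw [avoiderB, isCirc_one_cons_iff (by omega), show n - 1 = (n - 2) + 1 by omega,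
    List.range'_succ]
  refine List.perm_middle.trans (List.Perm.cons _ ?_)
  rw [← desc_add, show j + (n - 2 - j) = n - 2 by omega]
  exact desc_perm_range' _ _

section Pairs

variable {α : Type*} {x y : α}

lemma pair_sublist_cons {a : α} {w : List α} (h : [x, y] <+ a :: w) :
    (x = a ∧ y ∈ w) ∨ [x, y] <+ w := by
  cases h with
  | cons _ h => exact Or.inr h
  | cons_cons _ h => exact Or.inl ⟨rfl, List.singleton_sublist.1 h⟩

lemma pair_sublist_append {u v : List α} (h : [x, y] <+ u ++ v) :
    [x, y] <+ u ∨ [x, y] <+ v ∨ (x ∈ u ∧ y ∈ v) := by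
  obtain ⟨l₁, l₂, e, h₁, h₂⟩ := List.sublist_append_iff.1 h
  match l₁, l₂, e with
  | [], _, rfl => exact Or.inr (Or.inl h₂)
  | [_], [_], rfl =>
    exact Or.inr (Or.inr ⟨List.singleton_sublist.1 h₁, List.singleton_sublist.1 h₂⟩)
  | [_, _], [], rfl => exact Or.inl h₁

lemma pairs_of_sublist {a b c d : α} {l : List α} (P : α → α → Prop)
    (hP : ∀ x y, [x, y] <+ l → P x y) (h : [a, b, c, d] <+ l) :
    P a b ∧ P a c ∧ P a d ∧ P b c ∧ P b d ∧ P c d :=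
  ⟨hP _ _ (.trans (by simp) h), hP _ _ (.trans (by simp) h), hP _ _ (.trans (by simp) h),
    hP _ _ (.trans (by simp) h), hP _ _ (.trans (by simp) h), hP _ _ (.trans (by simp) h)⟩

end Pairs

lemma pair_sublist_desc {x y s k : ℕ} (h : [x, y] <+ desc s k) : s ≤ y ∧ y < x ∧ x < s + k := by
  have hx := mem_desc.1 (h.subset (by simp : x ∈ [x, y]))
  have hy := mem_desc.1 (h.subset (by simp : y ∈ [x, y]))
  have hxy : x > y := by simpa using (pairwise_gt_desc s k).sublist h
  omega

lemma pair_sublist_avoiderA {n k x y : ℕ} (h : [x, y] <+ avoiderA n k) :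
    x = 1 ∨ (2 ≤ y ∧ y < x ∧ (x ≤ k + 1 ∨ k + 2 ≤ y)) ∨ (x ≤ k + 1 ∧ k + 2 ≤ y) := by
  rcases pair_sublist_cons h with ⟨rfl, -⟩ | h
  · exact Or.inl rfl
  rcases pair_sublist_append h with h | h | ⟨hx, hy⟩
  · have := pair_sublist_desc h; omega
  · have := pair_sublist_desc h; omega
  · have := mem_desc.1 hx; have := mem_desc.1 hy; omega

lemma pair_sublist_avoiderB {n j x y : ℕ} (h : [x, y] <+ avoiderB n j) :
    x = 1 ∨ (2 ≤ y ∧ y < x ∧ j + 3 ≤ x) ∨ (x = 2 ∧ 3 ≤ y ∧ y < j + 3) ∨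
      (3 ≤ y ∧ y < x ∧ x < j + 3) := by
  rcases pair_sublist_cons h with ⟨rfl, -⟩ | h
  · exact Or.inl rfl
  rcases pair_sublist_append h with h | h | ⟨hx, hy⟩
  · have := pair_sublist_desc h; omega
  · rcases pair_sublist_cons h with ⟨rfl, hy⟩ | h
    · have := mem_desc.1 hy; omega
    · have := pair_sublist_desc h; omega
  · have := mem_desc.1 hx
    rcases List.mem_cons.1 hy with rfl | hy
    · omega
    · have := mem_desc.1 hy; omega

lemma not_forbidden_of_sublist_avoiderA {n k a b c d : ℕ} (h : [a, b, c, d] <+ avoiderA n k) :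
    ¬ Forbidden a b c d := by
  have := pairs_of_sublist _ (fun _ _ => pair_sublist_avoiderA) h
  unfold Forbidden
  omega

lemma not_forbidden_of_sublist_avoiderB {n j a b c d : ℕ} (h : [a, b, c, d] <+ avoiderB n j) :
    ¬ Forbidden a b c d := by
  have := pairs_of_sublist _ (fun _ _ => pair_sublist_avoiderB) h
  unfold Forbidden
  omega

section Classification

variable {n : ℕ}

lemma avoiderA_eq_of_avoids {P S : List ℕ} (hP : P ≠ [])
    (hPS : P ++ S ~ List.range' 2 (n - 2))
    (hav : ∀ a b c d, [a, b, c, d] <+ 1 :: (P ++ n :: S) → ¬ Forbidden a b c d) :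
    avoiderA n P.length = 1 :: (P ++ n :: S) := by
  have hval : ∀ x ∈ P ++ S, 2 ≤ x ∧ x < n := fun x hx => by
    have := List.mem_range'_1.1 (hPS.subset hx); omega
  obtain ⟨hndP, hndS, hne⟩ := List.nodup_append.1 (hPS.nodup_iff.2 List.nodup_range')
  have hsep : ∀ x ∈ P, ∀ y ∈ S, x < y := fun x hx y hy => by
    have := hav 1 x n y (((List.singleton_sublist.2 hx).append
      ((List.singleton_sublist.2 hy).cons_cons n)).cons_cons 1)
    have := hne x hx y hy
    have := hval x (List.mem_append_left _ hx); have := hval y (List.mem_append_right _ hy)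
    unfold Forbidden at *; omega
  have hdecP : P.Pairwise (· > ·) := pairwise_gt_of_nodup hndP fun a b hab => by
    have := hav 1 a b n ((hab.append ((List.nil_sublist S).cons_cons n)).cons_cons 1)
    have := hval a (List.mem_append_left _ (hab.subset (by simp)))
    have := hval b (List.mem_append_left _ (hab.subset (by simp)))
    unfold Forbidden at *; omega
  obtain ⟨p, hp⟩ := List.exists_mem_of_ne_nil P hP
  have hdecS : S.Pairwise (· > ·) := pairwise_gt_of_nodup hndS fun a b hab => by
    have := hav 1 p a b (((List.singleton_sublist.2 hp).append (hab.cons n)).cons_cons 1)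
    have := hsep p hp a (hab.subset (by simp))
    have := hval p (List.mem_append_left _ hp)
    unfold Forbidden at *; omega
  have hlen : P.length + S.length = n - 2 := by simpa using hPS.length_eq
  have hPpos : 0 < P.length := List.length_pos_iff.2 hP
  obtain ⟨hSdesc, hPdesc⟩ := eq_desc_of_perm (A := S) (B := P) (s := 2)
    (List.pairwise_append.2 ⟨hdecS, hdecP, fun y hy x hx => hsep x hx y hy⟩)
    (List.perm_append_comm.trans (hlen ▸ hPS))
  rw [avoiderA, show n - 1 - P.length = S.length + 1 by omega, desc_succ,
    show P.length + 2 + S.length = n by omega, ← hSdesc, ← hPdesc]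

lemma avoiderB_eq_of_avoids {Q T : List ℕ} (hn : 3 ≤ n)
    (hQT : Q ++ T ~ List.range' 3 (n - 3))
    (hav : ∀ a b c d, [a, b, c, d] <+ 1 :: n :: (Q ++ 2 :: T) → ¬ Forbidden a b c d) :
    avoiderB n T.length = 1 :: n :: (Q ++ 2 :: T) := by
  have hval : ∀ x ∈ Q ++ T, 3 ≤ x ∧ x < n := fun x hx => by
    have := List.mem_range'_1.1 (hQT.subset hx); omega
  obtain ⟨hndQ, hndT, hne⟩ := List.nodup_append.1 (hQT.nodup_iff.2 List.nodup_range')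
  have hsep : ∀ x ∈ Q, ∀ y ∈ T, x > y := fun x hx y hy => by
    have := hav n x 2 y ((((List.singleton_sublist.2 hx).append
      ((List.singleton_sublist.2 hy).cons_cons 2)).cons_cons n).cons 1)
    have := hne x hx y hy
    have := hval x (List.mem_append_left _ hx); have := hval y (List.mem_append_right _ hy)
    unfold Forbidden at *; omega
  have hdecQ : Q.Pairwise (· > ·) := pairwise_gt_of_nodup hndQ fun a b hab => by
    have := hav 1 a b 2 (((hab.append ((List.nil_sublist T).cons_cons 2)).cons n).cons_cons 1)
    have := hval a (List.mem_append_left _ (hab.subset (by simp)))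
    unfold Forbidden at *; omega
  have hdecT : T.Pairwise (· > ·) := pairwise_gt_of_nodup hndT fun a b hab => by
    have := hav 1 2 a b
      ((((hab.cons_cons 2).trans (List.sublist_append_right Q _)).cons n).cons_cons 1)
    have := hval a (List.mem_append_right _ (hab.subset (by simp)))
    unfold Forbidden at *; omega
  have hlen : Q.length + T.length = n - 3 := by simpa using hQT.length_eq
  obtain ⟨hQdesc, hTdesc⟩ := eq_desc_of_perm (A := Q) (B := T) (s := 3)
    (List.pairwise_append.2 ⟨hdecQ, hdecT, hsep⟩) (by rwa [add_comm, hlen])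
  rw [avoiderB, show n - 2 - T.length = Q.length + 1 by omega, desc_succ,
    show T.length + 3 + Q.length = n by omega, ← hQdesc, ← hTdesc]
  rfl

end Classification

def avoiders (n : ℕ) : Finset (List ℕ) :=
  (Finset.Icc 1 (n - 2)).image (avoiderA n) ∪ (Finset.range (n - 2)).image (avoiderB n)

theorem mem_avoiders_of_avoids {n : ℕ} {l : List ℕ} (hn : 3 ≤ n) (hl : IsCirc n l)
    (hav : ∀ a b c d, [a, b, c, d] <+ l → ¬ Forbidden a b c d) : l ∈ avoiders n := by
  obtain ⟨r, rfl⟩ : ∃ r, l = 1 :: r := ⟨l.tail, List.eq_cons_of_mem_head? (by simp [hl.2])⟩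
  have hr := (isCirc_one_cons_iff (by omega)).1 hl
  rw [show n - 1 = (n - 2) + 1 by omega, List.range'_concat, show 2 + 1 * (n - 2) = n by omega]
    at hr
  obtain ⟨P, S, rfl⟩ := List.append_of_mem (a := n) (hr.mem_iff.2 (by simp))
  have hPS : P ++ S ~ List.range' 2 (n - 2) :=
    (List.perm_middle.symm.trans (hr.trans (List.perm_append_singleton _ _))).cons_inv
  have hlenPS : P.length + S.length = n - 2 := by simpa using hPS.length_eq
  simp only [avoiders, Finset.mem_union, Finset.mem_image, Finset.mem_Icc, Finset.mem_range]
  rcases eq_or_ne P [] with rfl | hP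
  · rw [List.nil_append, show n - 2 = (n - 3) + 1 by omega, List.range'_succ] at hPS
    obtain ⟨Q, T, rfl⟩ := List.append_of_mem (hPS.mem_iff.2 List.mem_cons_self)
    have hQT : Q ++ T ~ List.range' 3 (n - 3) := (List.perm_middle.symm.trans hPS).cons_inv
    have hlenQT : Q.length + T.length = n - 3 := by simpa using hQT.length_eq
    exact Or.inr ⟨T.length, by omega, avoiderB_eq_of_avoids hn hQT hav⟩
  · have := List.length_pos_iff.2 hP
    exact Or.inl ⟨P.length, ⟨by omega, by omega⟩, avoiderA_eq_of_avoids hP hPS hav⟩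

lemma avoids_of_mem_avoiders {n : ℕ} {l : List ℕ} (hl : l ∈ avoiders n) :
    IsCirc n l ∧ ∀ a b c d, [a, b, c, d] <+ l → ¬ Forbidden a b c d := by
  simp only [avoiders, Finset.mem_union, Finset.mem_image, Finset.mem_Icc, Finset.mem_range] at hl
  rcases hl with ⟨k, hk, rfl⟩ | ⟨j, hj, rfl⟩
  · exact ⟨isCirc_avoiderA (by omega), fun _ _ _ _ => not_forbidden_of_sublist_avoiderA⟩
  · exact ⟨isCirc_avoiderB (by omega), fun _ _ _ _ => not_forbidden_of_sublist_avoiderB⟩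

lemma avoiderA_getElem?_one {n k : ℕ} (hk : 1 ≤ k) : (avoiderA n k)[1]? = some (k + 1) := by
  obtain ⟨k, rfl⟩ : ∃ k', k = k' + 1 := ⟨k - 1, by omega⟩
  simp only [avoiderA, desc_succ, List.cons_append, List.getElem?_cons_succ,
    List.getElem?_cons_zero]
  congr 1
  omega

lemma avoiderB_getElem?_one {n j : ℕ} (hj : j < n - 2) : (avoiderB n j)[1]? = some n := by
  rw [avoiderB, show n - 2 - j = (n - 3 - j) + 1 by omega, desc_succ]
  simp only [List.cons_append, List.getElem?_cons_succ, List.getElem?_cons_zero]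
  congr 1
  omega

lemma card_avoiders (n : ℕ) : (avoiders n).card = 2 * (n - 2) := by
  have injA : Set.InjOn (avoiderA n) (Finset.Icc 1 (n - 2)) := fun k hk k' hk' h => by
    simp only [Finset.coe_Icc, Set.mem_Icc] at hk hk'
    have := congrArg (·[1]?) h
    simp only [avoiderA_getElem?_one hk.1, avoiderA_getElem?_one hk'.1, Option.some.injEq] at this
    omega
  have injB : Set.InjOn (avoiderB n) (Finset.range (n - 2)) := fun j hj j' hj' h => by
    simp only [Finset.coe_range, Set.mem_Iio] at hj hj'
    have hhigh : 2 ∉ desc (j + 3) (n - 2 - j) := fun h2 => by have := mem_desc.1 h2; omega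
    have hlow : 2 ∉ desc 3 j := fun h2 => by have := mem_desc.1 h2; omega
    have := congrArg List.length
      ((List.append_cons_inj_of_notMem hhigh hlow).1 (List.cons.inj h).2).1
    simp only [length_desc] at this
    omega
  have disj : Disjoint ((Finset.Icc 1 (n - 2)).image (avoiderA n))
      ((Finset.range (n - 2)).image (avoiderB n)) := by
    simp only [Finset.disjoint_left, Finset.mem_image, Finset.mem_Icc, Finset.mem_range]
    rintro _ ⟨k, hk, rfl⟩ ⟨j, hj, h⟩
    have := congrArg (·[1]?) h
    simp only [avoiderA_getElem?_one hk.1, avoiderB_getElem?_one hj, Option.some.injEq] at this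
    omega
  rw [avoiders, Finset.card_union_of_disjoint disj, Finset.card_image_of_injOn injA,
    Finset.card_image_of_injOn injB, Nat.card_Icc, Finset.card_range]
  omega

/-- For `n ≥ 3`, the number of circular permutations of `[n]` avoiding both
`[1342]` and `[1234]` is `2(n-2)`. -/
theorem avoid_1342_1234_count (n : ℕ) (hn : 3 ≤ n) :
    {l : List ℕ | IsCirc n l ∧ ¬ CContains l [1, 3, 4, 2] ∧
      ¬ CContains l [1, 2, 3, 4]}.ncard = 2 * (n - 2) := by
  have hset : {l : List ℕ | IsCirc n l ∧ ¬ CContains l [1, 3, 4, 2] ∧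
      ¬ CContains l [1, 2, 3, 4]} = avoiders n := by
    ext l
    simp only [Set.mem_ofPred_eq, Finset.mem_coe, avoids_iff_forall_not_forbidden]
    exact ⟨fun h => mem_avoiders_of_avoids hn h.1 h.2, avoids_of_mem_avoiders⟩
  rw [hset, Set.ncard_coe_finset, card_avoiders]
end

section
/- A circled composition of n is a composition (a_1,...,a_k) of n together with a subset C of [k] containing 1 and k such that a_i = 1 for all i in C. For n ≥ 2, circled compositions of n are in bijection with circular permutations of [n] avoiding [1324]; in particular the number of circled compositions of n equals F_{2n-4}, where F_0 = F_1 = 1 and F_m = F_{m-1} + F_{m-2}. -/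
/-!
Removing the circled `1`s at both ends identifies circled compositions of `m + 2` with
compositions of `m` in which any part equal to `1` may be circled. Such a composition of `m + 1`
is a circled `1` followed by one of `m`, or an uncircled `m + 1 - k` followed by one of some
`k ≤ m`. Hence their numbers satisfy `G (m + 1) = G m + ∑ k ≤ m, G k`, and so does
`G m = fib (2 * m + 1)`, because `∑ k < n, fib (2 * k + 1) = fib (2 * n)`. Finally
`F k = fib (k + 1)`.
-/

/-- A circled composition of `n`, encoded as a list of parts each with a
`Bool` flag (`true` = circled): all parts are positive, circled parts equal
`1`, the parts sum to `n`, and the first and last parts are circled. -/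
def IsCircledComp (n : ℕ) (l : List (ℕ × Bool)) : Prop :=
  (∀ p ∈ l, 0 < p.1) ∧ (∀ p ∈ l, p.2 = true → p.1 = 1) ∧
  (l.map Prod.fst).sum = n ∧
  l.head?.map Prod.snd = some true ∧ l.getLast?.map Prod.snd = some true

/-- Fibonacci numbers with `F 0 = F 1 = 1`. -/
def F : ℕ → ℕ
  | 0 => 1
  | 1 => 1
  | n + 2 => F (n + 1) + F n

open Finset

theorem F_eq_fib : ∀ k, F k = Nat.fib (k + 1)
  | 0 => rfl
  | 1 => rfl
  | k + 2 => by rw [F, F_eq_fib (k + 1), F_eq_fib k, Nat.fib_add_two (n := k + 1)]; ring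

theorem Nat.sum_range_fib_two_mul_add_one (n : ℕ) :
    ∑ k ∈ range n, Nat.fib (2 * k + 1) = Nat.fib (2 * n) := by
  induction n with
  | zero => rfl
  | succ n ih => rw [sum_range_succ, ih, Nat.mul_succ, Nat.fib_add_two]

def IsFlaggedComp (m : ℕ) (l : List (ℕ × Bool)) : Prop :=
  (∀ p ∈ l, 0 < p.1) ∧ (∀ p ∈ l, p.2 = true → p.1 = 1) ∧ (l.map Prod.fst).sum = m

theorem isFlaggedComp_nil_iff {m : ℕ} : IsFlaggedComp m [] ↔ m = 0 := by
  simp only [IsFlaggedComp, List.not_mem_nil, IsEmpty.forall_iff, implies_true, List.map_nil,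
    List.sum_nil, true_and, eq_comm]

theorem isFlaggedComp_cons_iff {m : ℕ} {p : ℕ × Bool} {l : List (ℕ × Bool)} :
    IsFlaggedComp m (p :: l) ↔
      0 < p.1 ∧ (p.2 = true → p.1 = 1) ∧ p.1 ≤ m ∧ IsFlaggedComp (m - p.1) l := by
  simp only [IsFlaggedComp, List.forall_mem_cons, List.map_cons, List.sum_cons]
  constructor
  · rintro ⟨⟨hp, hl⟩, ⟨hpc, hlc⟩, hsum⟩
    exact ⟨hp, hpc, by omega, hl, hlc, by omega⟩
  · rintro ⟨hp, hpc, hle, hl, hlc, hsum⟩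
    exact ⟨⟨hp, hl⟩, ⟨hpc, hlc⟩, by omega⟩

theorem IsFlaggedComp.eq_one_true_of_mem {m : ℕ} {l : List (ℕ × Bool)} {p : ℕ × Bool}
    (hl : IsFlaggedComp m l) (hp : p ∈ l) (hc : p.2 = true) : p = (1, true) :=
  Prod.ext (hl.2.1 p hp hc) hc

theorem isFlaggedComp_zero_iff {l : List (ℕ × Bool)} : IsFlaggedComp 0 l ↔ l = [] := by
  cases l with
  | nil => simp [isFlaggedComp_nil_iff]
  | cons p t => simp only [isFlaggedComp_cons_iff, reduceCtorEq, iff_false]; omega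

theorem isFlaggedComp_succ_iff {m : ℕ} {l : List (ℕ × Bool)} :
    IsFlaggedComp (m + 1) l ↔
      (∃ t, IsFlaggedComp m t ∧ (1, true) :: t = l) ∨
        ∃ k : Fin (m + 1), ∃ t, IsFlaggedComp k t ∧ (m + 1 - k, false) :: t = l := by
  constructor
  · intro hl
    obtain _ | ⟨⟨a, c⟩, t⟩ := l
    · simp [isFlaggedComp_nil_iff] at hl
    obtain ⟨ha, hc, hle, ht⟩ := isFlaggedComp_cons_iff.1 hl
    cases c
    · refine .inr ⟨⟨m + 1 - a, by omega⟩, t, ?_⟩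
      simpa [Nat.sub_sub_self hle] using ht
    · obtain rfl : a = 1 := hc rfl
      exact .inl ⟨t, ht, rfl⟩
  · rintro (⟨t, ht, rfl⟩ | ⟨k, t, ht, rfl⟩)
    · exact isFlaggedComp_cons_iff.2 ⟨one_pos, fun _ => rfl, by omega, ht⟩
    · refine isFlaggedComp_cons_iff.2 ⟨by omega, by simp, by omega, ?_⟩
      rwa [Nat.sub_sub_self (by omega)]

def flaggedComps : ℕ → Finset (List (ℕ × Bool))
  | 0 => {[]}
  | m + 1 => (flaggedComps m).image (List.cons (1, true)) ∪
      univ.biUnion fun k : Fin (m + 1) => (flaggedComps k).image (List.cons (m + 1 - k, false))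

theorem mem_flaggedComps {m : ℕ} {l : List (ℕ × Bool)} :
    l ∈ flaggedComps m ↔ IsFlaggedComp m l := by
  induction m using Nat.strong_induction_on generalizing l with
  | _ m ih =>
    cases m with
    | zero => simp [flaggedComps, isFlaggedComp_zero_iff]
    | succ m =>
      simp only [flaggedComps, isFlaggedComp_succ_iff, mem_union, mem_image, mem_biUnion, mem_univ,
        true_and, ih m m.lt_succ_self]
      exact or_congr_right <| exists_congr fun k => by simp only [ih k k.is_lt]

theorem card_flaggedComps_succ (m : ℕ) :
    #(flaggedComps (m + 1)) = #(flaggedComps m) + ∑ k ∈ range (m + 1), #(flaggedComps k) := by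
  have hdisj : Disjoint ((flaggedComps m).image (List.cons (1, true)))
      (univ.biUnion fun k : Fin (m + 1) =>
        (flaggedComps k).image (List.cons (m + 1 - k, false))) := by
    simp [disjoint_left]
  have hpair : (↑(univ : Finset (Fin (m + 1))) : Set (Fin (m + 1))).PairwiseDisjoint
      fun k => (flaggedComps k).image (List.cons (m + 1 - k, false)) := by
    intro j _ k _ hjk
    simp only [Function.onFun, disjoint_left, mem_image]
    rintro _ ⟨s, -, rfl⟩ ⟨t, -, h⟩
    have := congrArg (fun l => l.head?.map Prod.fst) h
    simp only [List.head?_cons, Option.map_some, Option.some.injEq] at this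
    exact hjk (Fin.ext (by omega))
  rw [flaggedComps, card_union_of_disjoint hdisj, card_biUnion hpair,
    card_image_of_injective _ List.cons_injective,
    ← Fin.sum_univ_eq_sum_range (fun k => #(flaggedComps k))]
  simp only [card_image_of_injective _ List.cons_injective]

theorem card_flaggedComps (m : ℕ) : #(flaggedComps m) = Nat.fib (2 * m + 1) := by
  induction m using Nat.strong_induction_on with
  | _ m ih =>
    cases m with
    | zero => simp [flaggedComps]
    | succ m =>
      rw [card_flaggedComps_succ, ih m m.lt_succ_self,
        sum_congr rfl fun k hk => ih k (mem_range.1 hk), Nat.sum_range_fib_two_mul_add_one]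
      exact (Nat.fib_add_two (n := 2 * m + 1)).symm

theorem ncard_setOf_isFlaggedComp (m : ℕ) :
    {l | IsFlaggedComp m l}.ncard = Nat.fib (2 * m + 1) := by
  rw [← card_flaggedComps, ← Set.ncard_coe_finset]
  congr
  ext l
  exact mem_flaggedComps.symm

theorem isCircledComp_iff {n : ℕ} {l : List (ℕ × Bool)} :
    IsCircledComp n l ↔ IsFlaggedComp n l ∧
      l.head?.map Prod.snd = some true ∧ l.getLast?.map Prod.snd = some true := by
  simp only [IsCircledComp, IsFlaggedComp, and_assoc]

theorem isFlaggedComp_circle_ends_iff {m : ℕ} {t : List (ℕ × Bool)} :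
    IsFlaggedComp (m + 2) ((1, true) :: (t ++ [(1, true)])) ↔ IsFlaggedComp m t := by
  have hsum : 1 + ((t.map Prod.fst).sum + 1) = m + 2 ↔ (t.map Prod.fst).sum = m := by omega
  simp only [IsFlaggedComp, List.forall_mem_cons, List.forall_mem_append, List.map_cons,
    List.map_append, List.map_nil, List.sum_cons, List.sum_append, List.sum_nil, add_zero, hsum]
  simp

theorem setOf_isCircledComp_add_two (m : ℕ) :
    {l | IsCircledComp (m + 2) l} =
      (fun t => (1, true) :: (t ++ [(1, true)])) '' {t | IsFlaggedComp m t} := by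
  ext l
  simp only [Set.mem_ofPred_eq, Set.mem_image, isCircledComp_iff]
  constructor
  · rintro ⟨hl, hhead, hlast⟩
    obtain _ | ⟨p, t⟩ := l
    · simp at hhead
    obtain rfl := hl.eq_one_true_of_mem List.mem_cons_self (by simpa using hhead)
    obtain rfl | ⟨t, q, rfl⟩ := t.eq_nil_or_concat'
    · simp [isFlaggedComp_cons_iff, isFlaggedComp_nil_iff] at hl
    rw [← List.cons_append, List.getLast?_concat] at hlast
    obtain rfl := hl.eq_one_true_of_mem (p := q) (by simp) (by simpa using hlast)
    exact ⟨t, isFlaggedComp_circle_ends_iff.1 hl, rfl⟩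
  · rintro ⟨t, ht, rfl⟩
    refine ⟨isFlaggedComp_circle_ends_iff.2 ht, rfl, ?_⟩
    rw [← List.cons_append, List.getLast?_concat]
    rfl

/-- For `n ≥ 2`, the number of circled compositions of `n` is `F_(2n-4)`. -/
theorem circled_comp_count (n : ℕ) (hn : 2 ≤ n) :
    {l : List (ℕ × Bool) | IsCircledComp n l}.ncard = F (2 * n - 4) := by
  obtain ⟨m, rfl⟩ := Nat.exists_eq_add_of_le' hn
  have hinj : Function.Injective fun t : List (ℕ × Bool) => (1, true) :: (t ++ [(1, true)]) :=
    fun s t h => List.append_cancel_right (List.cons_injective h)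
  rw [setOf_isCircledComp_add_two, Set.ncard_image_of_injective _ hinj,
    ncard_setOf_isFlaggedComp, F_eq_fib, show 2 * (m + 2) - 4 + 1 = 2 * m + 1 by omega]
end

section
/- For n ≥ 2 and i ≥ 0, the number of circled compositions of n with exactly i uncircled parts equals binomial(n+i-2, 2i). -/
/-!
For `n ≥ 2` the first and last parts of a circled composition are two distinct circled `1`s;
stripping them leaves its interior, an arbitrary sequence of circled `1`s and uncircled positive
parts of total `m = n - 2`. Let `W m i` count these interiors with `i` uncircled parts and `U m i`
those among them that start with an uncircled part. Classifying by the first part (a circled `1`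
is dropped, an uncircled `1` is dropped, a larger uncircled part is decreased by one) gives
`W (m+1) i = W m i + U (m+1) i` and `U (m+1) (i+1) = W m i + U m (i+1)`, so by Pascal's rule
`W m i = C(m+i, 2i)` and `U m (i+1) = C(m+i, 2i+1)`.
-/

theorem List.modifyHead_injective {α : Type*} {f : α → α} (hf : Function.Injective f) :
    Function.Injective (List.modifyHead f) := by
  rintro (_ | ⟨a, l⟩) (_ | ⟨b, l'⟩) h <;> simp_all [hf.eq_iff]

theorem List.finite_length_le_forall_mem {α : Type*} {s : Set α} (hs : s.Finite) (n : ℕ) :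
    {l : List α | l.length ≤ n ∧ ∀ x ∈ l, x ∈ s}.Finite := by
  have := hs.to_subtype
  refine ((List.finite_length_le s n).image (List.map Subtype.val)).subset ?_
  rintro l ⟨hlen, hmem⟩
  lift l to List s using hmem
  exact ⟨l, by simpa using hlen, rfl⟩

namespace CircledComp

def interiors (m i : ℕ) : Set (List (ℕ × Bool)) :=
  {l | (∀ p ∈ l, 0 < p.1) ∧ (∀ p ∈ l, p.2 = true → p.1 = 1) ∧
    (l.map Prod.fst).sum = m ∧ (l.filter (fun p => !p.2)).length = i}

def uncircledHead (m i : ℕ) : Set (List (ℕ × Bool)) :=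
  {l ∈ interiors m i | l.head?.map Prod.snd = some false}

theorem interiors_finite (m i : ℕ) : (interiors m i).Finite := by
  refine (List.finite_length_le_forall_mem
    ((Set.finite_Iic m).prod (Set.finite_univ (α := Bool))) m).subset ?_
  rintro l ⟨hpos, -, rfl, -⟩
  exact ⟨l.length_map Prod.fst ▸ List.length_le_sum_of_one_le _ (List.forall_mem_map.2 hpos),
    fun p hp => ⟨List.le_sum_of_mem (List.mem_map_of_mem (f := Prod.fst) hp), trivial⟩⟩

theorem uncircledHead_finite (m i : ℕ) : (uncircledHead m i).Finite :=
  (interiors_finite m i).subset fun _ hl => hl.1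

variable {m i : ℕ} {t : List (ℕ × Bool)}

theorem mem_interiors_zero {l : List (ℕ × Bool)} : l ∈ interiors 0 i ↔ l = [] ∧ i = 0 := by
  cases l <;> grind [interiors]

theorem circled_cons_mem_interiors :
    (1, true) :: t ∈ interiors (m + 1) i ↔ t ∈ interiors m i := by
  grind [interiors]

theorem uncircled_one_cons_mem_interiors :
    (1, false) :: t ∈ interiors (m + 1) (i + 1) ↔ t ∈ interiors m i := by
  grind [interiors]

theorem uncircled_succ_cons_mem_interiors {a : ℕ} (ha : 0 < a) :
    (a + 1, false) :: t ∈ interiors (m + 1) i ↔ (a, false) :: t ∈ interiors m i := by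
  grind [interiors]

theorem interiors_succ (m i : ℕ) :
    interiors (m + 1) i = List.cons (1, true) '' interiors m i ∪ uncircledHead (m + 1) i := by
  ext (_ | ⟨⟨a, _ | _⟩, t⟩)
  · simp [interiors, uncircledHead]
  · simp [uncircledHead]
  · constructor
    · intro h
      obtain rfl : a = 1 := h.2.1 _ List.mem_cons_self rfl
      exact Or.inl ⟨t, circled_cons_mem_interiors.1 h, rfl⟩
    · rintro (⟨t, ht, h⟩ | ⟨-, h⟩)
      · exact h ▸ circled_cons_mem_interiors.2 ht
      · simp at h

theorem uncircledHead_succ_succ (m i : ℕ) :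
    uncircledHead (m + 1) (i + 1) = List.cons (1, false) '' interiors m i ∪
      List.modifyHead (Prod.map (· + 1) id) '' uncircledHead m (i + 1) := by
  apply subset_antisymm
  · rintro (_ | ⟨⟨a, b⟩, t⟩) ⟨hl, hhead⟩
    · simp at hhead
    obtain rfl : b = false := by simpa using hhead
    obtain _ | _ | a := a
    · exact absurd (hl.1 _ List.mem_cons_self) (lt_irrefl 0)
    · exact Or.inl ⟨t, uncircled_one_cons_mem_interiors.1 hl, rfl⟩
    · exact Or.inr ⟨(a + 1, false) :: t,
        ⟨(uncircled_succ_cons_mem_interiors a.succ_pos).1 hl, rfl⟩, rfl⟩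
  · rintro _ (⟨t, ht, rfl⟩ | ⟨_ | ⟨⟨a, b⟩, t⟩, ⟨hl, hhead⟩, rfl⟩)
    · exact ⟨uncircled_one_cons_mem_interiors.2 ht, rfl⟩
    · simp at hhead
    obtain rfl : b = false := by simpa using hhead
    exact ⟨(uncircled_succ_cons_mem_interiors (hl.1 _ List.mem_cons_self)).2 hl, rfl⟩

theorem uncircledHead_zero_right (m : ℕ) : uncircledHead m 0 = ∅ := by
  refine Set.eq_empty_of_forall_notMem ?_
  rintro (_ | ⟨⟨a, b⟩, t⟩) ⟨hl, hhead⟩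
  · simp at hhead
  obtain rfl : b = false := by simpa using hhead
  simpa using hl.2.2.2

theorem uncircledHead_zero_left (i : ℕ) : uncircledHead 0 i = ∅ := by
  refine Set.eq_empty_of_forall_notMem fun l ⟨hl, hhead⟩ => ?_
  rw [(mem_interiors_zero.1 hl).1] at hhead
  simp at hhead

theorem disjoint_circled_cons_image_uncircledHead (m i : ℕ) :
    Disjoint (List.cons (1, true) '' interiors m i) (uncircledHead (m + 1) i) := by
  rw [Set.disjoint_left]
  rintro _ ⟨t, -, rfl⟩ ⟨-, hhead⟩
  simp at hhead

theorem disjoint_uncircled_cons_image_modifyHead_image (m i : ℕ) :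
    Disjoint (List.cons (1, false) '' interiors m i)
      (List.modifyHead (Prod.map (· + 1) id) '' uncircledHead m (i + 1)) := by
  rw [Set.disjoint_left]
  rintro _ ⟨t, -, rfl⟩ ⟨_ | ⟨⟨a, b⟩, s⟩, ⟨hs, -⟩, h⟩
  · simp at h
  · have : 0 < a := hs.1 _ List.mem_cons_self
    simp at h
    omega

theorem ncard_interiors_succ (m i : ℕ) :
    (interiors (m + 1) i).ncard = (interiors m i).ncard + (uncircledHead (m + 1) i).ncard := by
  rw [interiors_succ, Set.ncard_union_eq (disjoint_circled_cons_image_uncircledHead m i)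
      ((interiors_finite m i).image _) (uncircledHead_finite (m + 1) i),
    Set.ncard_image_of_injective _ List.cons_injective]

theorem ncard_uncircledHead_succ_succ (m i : ℕ) :
    (uncircledHead (m + 1) (i + 1)).ncard =
      (interiors m i).ncard + (uncircledHead m (i + 1)).ncard := by
  rw [uncircledHead_succ_succ,
    Set.ncard_union_eq (disjoint_uncircled_cons_image_modifyHead_image m i)
      ((interiors_finite m i).image _) ((uncircledHead_finite m (i + 1)).image _),
    Set.ncard_image_of_injective _ List.cons_injective,
    Set.ncard_image_of_injective _
      (List.modifyHead_injective ((add_left_injective 1).prodMap Function.injective_id))]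

theorem ncard_interiors_and_uncircledHead (m i : ℕ) :
    (interiors m i).ncard = (m + i).choose (2 * i) ∧
      (uncircledHead m (i + 1)).ncard = (m + i).choose (2 * i + 1) := by
  induction m generalizing i with
  | zero =>
    refine ⟨?_, by
      rw [uncircledHead_zero_left, Set.ncard_empty, Nat.choose_eq_zero_of_lt (by omega)]⟩
    obtain _ | i := i
    · rw [show interiors 0 0 = {[]} by ext; simp [mem_interiors_zero], Set.ncard_singleton,
        Nat.choose_self]
    · rw [show interiors 0 (i + 1) = ∅ by ext; simp [mem_interiors_zero], Set.ncard_empty,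
        Nat.choose_eq_zero_of_lt (by omega)]
  | succ m ih =>
    have hU (j : ℕ) :
        (uncircledHead (m + 1) (j + 1)).ncard = (m + 1 + j).choose (2 * j + 1) := by
      rw [ncard_uncircledHead_succ_succ, (ih j).1, (ih j).2, Nat.add_right_comm,
        Nat.choose_succ_succ']
    refine ⟨?_, hU i⟩
    rw [ncard_interiors_succ, (ih i).1]
    obtain _ | j := i
    · simp [uncircledHead_zero_right]
    · rw [hU j, show m + (j + 1) = m + 1 + j by omega,
        show m + 1 + (j + 1) = m + 1 + j + 1 by omega, show 2 * (j + 1) = 2 * j + 1 + 1 by omega,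
        Nat.choose_succ_succ' (m + 1 + j), add_comm]

def enclose (t : List (ℕ × Bool)) : List (ℕ × Bool) := (1, true) :: (t ++ [(1, true)])

theorem enclose_injective : Function.Injective enclose :=
  (List.append_left_injective _).comp List.cons_injective

theorem isCircledComp_enclose_iff :
    IsCircledComp (m + 2) (enclose t) ∧ ((enclose t).filter (fun p => !p.2)).length = i ↔
      t ∈ interiors m i := by
  simp only [IsCircledComp, enclose, interiors, Set.mem_ofPred_eq, List.forall_mem_cons,
    List.forall_mem_append, List.map_cons, List.map_append,
    List.sum_cons, List.sum_append, List.filter_cons, List.filter_append, List.head?_cons,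
    List.getLast?_cons, List.getLast?_append]
  grind

theorem exists_enclose_eq_of_isCircledComp {n : ℕ} {l : List (ℕ × Bool)} (hn : 2 ≤ n)
    (hl : IsCircledComp n l) : ∃ t, l = enclose t := by
  obtain ⟨-, hcirc, hsum, hhead, hlast⟩ := hl
  obtain ⟨q, hq, hq2⟩ : ∃ q, l.getLast? = some q ∧ q.2 = true := by simpa using hlast
  obtain rfl : q = (1, true) := Prod.ext (hcirc q (List.mem_of_getLast? hq) hq2) hq2
  obtain ⟨_ | ⟨⟨a, b⟩, t⟩, rfl⟩ : ∃ r, l = r ++ [(1, true)] :=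
    ⟨_, (List.dropLast_append_getLast? _ hq).symm⟩
  · simp at hsum
    omega
  obtain rfl : b = true := by simpa using hhead
  obtain rfl : a = 1 := hcirc _ List.mem_cons_self rfl
  exact ⟨t, rfl⟩

theorem setOf_isCircledComp_eq_image (m i : ℕ) :
    {l : List (ℕ × Bool) | IsCircledComp (m + 2) l ∧ (l.filter (fun p => !p.2)).length = i} =
      enclose '' interiors m i := by
  ext l
  constructor
  · intro hl
    obtain ⟨t, rfl⟩ := exists_enclose_eq_of_isCircledComp (by omega) hl.1
    exact ⟨t, isCircledComp_enclose_iff.1 hl, rfl⟩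
  · rintro ⟨t, ht, rfl⟩
    exact isCircledComp_enclose_iff.2 ht

end CircledComp

/-- For `n ≥ 2`, the number of circled compositions of `n` with exactly `i`
uncircled parts is `C(n+i-2, 2i)`. -/
theorem circled_comp_uncircled_count (n i : ℕ) (hn : 2 ≤ n) :
    {l : List (ℕ × Bool) | IsCircledComp n l ∧
      (l.filter (fun p => !p.2)).length = i}.ncard
      = (n + i - 2).choose (2 * i) := by
  obtain ⟨m, rfl⟩ := Nat.exists_eq_add_of_le' hn
  rw [CircledComp.setOf_isCircledComp_eq_image,
    Set.ncard_image_of_injective _ CircledComp.enclose_injective,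
    (CircledComp.ncard_interiors_and_uncircledHead m i).1, Nat.add_right_comm, Nat.add_sub_cancel]
end

section
/- For n ≥ 3, the number of circled compositions of n in which all uncircled parts occur in consecutive positions equals 2^{n-1} - (n-1). -/
lemma Composition.blocks_eq_of_length_ne_two {n : ℕ} (hn : 0 < n) (c : Composition n)
    (hc : c.length ≠ 2) : c.blocks = [n] ∨ ∃ a m b, m ≠ [] ∧ c.blocks = a :: (m ++ [b]) := by
  rcases hbl : c.blocks with _ | ⟨a, _ | ⟨x, rest⟩⟩
  · have := c.blocks_sum; simp [hbl] at this; omega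
  · left; have := c.blocks_sum; simp_all
  · right
    have hrest : rest ≠ [] := by
      rintro rfl; exact hc (by simp [Composition.length, hbl])
    refine ⟨a, x :: rest.dropLast, rest.getLast hrest, by simp, ?_⟩
    rw [List.cons_append, List.dropLast_append_getLast hrest]

lemma Composition.ncard_length_eq_two (n : ℕ) :
    {c : Composition n | c.length = 2}.ncard = n - 1 := by
  have hinj : Set.InjOn (fun c : Composition n => c.blocks.headI) {c | c.length = 2} := by
    intro c hc c' hc' h
    obtain ⟨x, y, hxy⟩ := List.length_eq_two.1 hc
    obtain ⟨x', y', hxy'⟩ := List.length_eq_two.1 hc'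
    have hs := c.blocks_sum
    have hs' := c'.blocks_sum
    simp only [hxy, hxy', List.headI_cons, List.sum_cons, List.sum_nil] at h hs hs'
    apply Composition.ext
    rw [hxy, hxy', h, show y = y' by omega]
  have himage : (fun c : Composition n => c.blocks.headI) '' {c | c.length = 2} = Set.Ioo 0 n := by
    ext k
    constructor
    · rintro ⟨c, hc, rfl⟩
      obtain ⟨x, y, hxy⟩ := List.length_eq_two.1 hc
      have hx := c.one_le_blocks (by simp [hxy] : x ∈ c.blocks)
      have hy := c.one_le_blocks (by simp [hxy] : y ∈ c.blocks)
      have hs := c.blocks_sum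
      simp only [hxy, List.headI_cons, List.sum_cons, List.sum_nil, Set.mem_Ioo] at hs ⊢
      omega
    · rintro ⟨hk, hkn⟩
      refine ⟨⟨[k, n - k], fun hi => ?_, by simp; omega⟩, rfl, rfl⟩
      simp only [List.mem_cons, List.not_mem_nil, or_false] at hi
      omega
  rw [← hinj.ncard_image, himage, Set.ncard_Ioo_nat, Nat.sub_zero]

namespace CircledComp

def consecutiveUncircledComps (n : ℕ) : Set (List (ℕ × Bool)) :=
  {l | IsCircledComp n l ∧
    ∃ pre mid post : List (ℕ × Bool), l = pre ++ mid ++ post ∧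
      (∀ p ∈ pre, p.2 = true) ∧ (∀ p ∈ mid, p.2 = false) ∧ (∀ p ∈ post, p.2 = true)}

def circledOnes (a : ℕ) : List (ℕ × Bool) := List.replicate a (1, true)

def uncircled (m : List ℕ) : List (ℕ × Bool) := m.map (·, false)

@[simp] lemma circledOnes_zero : circledOnes 0 = [] := rfl

lemma circledOnes_succ (a : ℕ) : circledOnes (a + 1) = (1, true) :: circledOnes a := rfl

lemma circledOnes_succ' (a : ℕ) : circledOnes (a + 1) = circledOnes a ++ [(1, true)] :=
  List.replicate_succ' ..

lemma eq_of_mem_circledOnes {p : ℕ × Bool} {a : ℕ} (hp : p ∈ circledOnes a) : p = (1, true) :=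
  List.eq_of_mem_replicate hp

@[simp] lemma sum_fst_circledOnes (a : ℕ) : ((circledOnes a).map Prod.fst).sum = a := by
  simp [circledOnes]

@[simp] lemma sum_fst_uncircled (m : List ℕ) : ((uncircled m).map Prod.fst).sum = m.sum := by
  simp [uncircled, Function.comp_def]

lemma uncircled_injective : Function.Injective uncircled :=
  List.map_injective_iff.2 fun _ _ h => (Prod.mk.inj h).1

lemma eq_circledOnes_of_forall_snd {l : List (ℕ × Bool)} (hone : ∀ p ∈ l, p.2 = true → p.1 = 1)
    (hl : ∀ p ∈ l, p.2 = true) : l = circledOnes l.length :=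
  List.eq_replicate_iff.2 ⟨rfl, fun p hp => Prod.ext (hone p hp (hl p hp)) (hl p hp)⟩

lemma eq_uncircled_of_forall_snd {l : List (ℕ × Bool)} (hl : ∀ p ∈ l, p.2 = false) :
    l = uncircled (l.map Prod.fst) := by
  rw [uncircled, List.map_map]
  conv_lhs => rw [← List.map_id l]
  exact List.map_congr_left fun p hp => Prod.ext rfl (hl p hp :)

lemma length_takeWhile_circledOnes_append_uncircled (a : ℕ) {m : List ℕ} (hm : m ≠ [])
    (r : List (ℕ × Bool)) :
    ((circledOnes a ++ uncircled m ++ r).takeWhile (·.2)).length = a := by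
  obtain ⟨x, m, rfl⟩ := List.exists_cons_of_ne_nil hm
  rw [List.append_assoc, List.takeWhile_append_of_pos (by simp [circledOnes])]
  simp [uncircled, circledOnes]

lemma reverse_circledOnes_append_uncircled (a b : ℕ) (m : List ℕ) :
    (circledOnes a ++ uncircled m ++ circledOnes b).reverse
      = circledOnes b ++ uncircled m.reverse ++ circledOnes a := by
  simp [circledOnes, uncircled, List.map_reverse]

lemma circledOnes_append_uncircled_inj {a b a' b' : ℕ} {m m' : List ℕ} (hm : m ≠ [])
    (hm' : m' ≠ [])
    (h : circledOnes a ++ uncircled m ++ circledOnes b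
      = circledOnes a' ++ uncircled m' ++ circledOnes b') :
    a = a' ∧ m = m' ∧ b = b' := by
  have ha : a = a' := by
    rw [← length_takeWhile_circledOnes_append_uncircled a hm (circledOnes b), h,
      length_takeWhile_circledOnes_append_uncircled a' hm']
  have hb : b = b' := by
    have h' := congrArg List.reverse h
    rw [reverse_circledOnes_append_uncircled, reverse_circledOnes_append_uncircled] at h'
    rw [← length_takeWhile_circledOnes_append_uncircled b (List.reverse_ne_nil_iff.2 hm)
      (circledOnes a), h', length_takeWhile_circledOnes_append_uncircled b'
      (List.reverse_ne_nil_iff.2 hm')]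
  subst ha hb
  rw [List.append_assoc, List.append_assoc] at h
  exact ⟨rfl, uncircled_injective (List.append_inj_left' (List.append_cancel_left h) rfl), rfl⟩

lemma circledOnes_mem_consecutiveUncircledComps {n : ℕ} (hn : 0 < n) :
    circledOnes n ∈ consecutiveUncircledComps n := by
  obtain ⟨k, rfl⟩ := Nat.exists_eq_add_one_of_ne_zero hn.ne'
  refine ⟨⟨fun p hp => ?_, fun p hp _ => ?_, by simp, by simp [circledOnes_succ], ?_⟩,
    circledOnes (k + 1), [], [], by simp, fun p hp => ?_, by simp, by simp⟩
  · rw [eq_of_mem_circledOnes hp]; exact Nat.one_pos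
  · rw [eq_of_mem_circledOnes hp]
  · simp only [circledOnes_succ', List.getLast?_concat]; rfl
  · rw [eq_of_mem_circledOnes hp]

lemma circledOnes_append_uncircled_mem_consecutiveUncircledComps {a b : ℕ} {m : List ℕ}
    (ha : 0 < a) (hb : 0 < b) (hm : ∀ x ∈ m, 0 < x) :
    circledOnes a ++ uncircled m ++ circledOnes b ∈ consecutiveUncircledComps (a + m.sum + b) := by
  obtain ⟨a, rfl⟩ := Nat.exists_eq_add_one_of_ne_zero ha.ne'
  obtain ⟨b, rfl⟩ := Nat.exists_eq_add_one_of_ne_zero hb.ne'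
  have hmem : ∀ p ∈ circledOnes (a + 1) ++ uncircled m ++ circledOnes (b + 1),
      p = (1, true) ∨ ∃ x ∈ m, p = (x, false) := by
    intro p hp
    simp only [List.mem_append, uncircled, List.mem_map] at hp
    rcases hp with (hp | ⟨x, hx, rfl⟩) | hp
    exacts [.inl (eq_of_mem_circledOnes hp), .inr ⟨x, hx, rfl⟩, .inl (eq_of_mem_circledOnes hp)]
  refine ⟨⟨fun p hp => ?_, fun p hp hc => ?_, by simp [add_assoc], ?_, ?_⟩, _, _, _, rfl,
    fun p hp => ?_, fun p hp => ?_, fun p hp => ?_⟩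
  · rcases hmem p hp with rfl | ⟨x, hx, rfl⟩
    exacts [Nat.one_pos, hm x hx]
  · rcases hmem p hp with rfl | ⟨x, hx, rfl⟩
    exacts [rfl, absurd hc Bool.false_ne_true]
  · simp [circledOnes_succ]
  · simp only [circledOnes_succ', ← List.append_assoc, List.getLast?_concat]; rfl
  · rw [eq_of_mem_circledOnes hp]
  · obtain ⟨x, -, rfl⟩ := List.mem_map.1 hp; rfl
  · rw [eq_of_mem_circledOnes hp]

lemma eq_of_mem_consecutiveUncircledComps {n : ℕ} {l : List (ℕ × Bool)}
    (hl : l ∈ consecutiveUncircledComps n) :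
    l = circledOnes n ∨ ∃ a m b, 0 < a ∧ 0 < b ∧ m ≠ [] ∧ (∀ x ∈ m, 0 < x) ∧
      a + m.sum + b = n ∧ l = circledOnes a ++ uncircled m ++ circledOnes b := by
  obtain ⟨⟨hpos, hone, hsum, hhead, hlast⟩, pre, mid, post, rfl, hpre, hmid, hpost⟩ := hl
  obtain ⟨a, rfl⟩ : ∃ a, pre = circledOnes a :=
    ⟨_, eq_circledOnes_of_forall_snd (fun p hp => hone p (by simp [hp])) hpre⟩
  obtain ⟨b, rfl⟩ : ∃ b, post = circledOnes b :=
    ⟨_, eq_circledOnes_of_forall_snd (fun p hp => hone p (by simp [hp])) hpost⟩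
  obtain ⟨m, rfl⟩ : ∃ m, mid = uncircled m := ⟨_, eq_uncircled_of_forall_snd hmid⟩
  simp only [List.map_append, List.sum_append, sum_fst_circledOnes, sum_fst_uncircled] at hsum
  rcases eq_or_ne m [] with rfl | hm
  · left
    rw [← hsum]
    simp [uncircled, circledOnes]
  · right
    obtain ⟨x, m', rfl⟩ := List.exists_cons_of_ne_nil hm
    refine ⟨a, x :: m', b, Nat.pos_of_ne_zero ?_, Nat.pos_of_ne_zero ?_, hm,
      fun y hy => hpos (y, false) (List.mem_append_left _ (List.mem_append_right _
        (List.mem_map_of_mem hy))), hsum, rfl⟩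
    · rintro rfl
      simp [circledOnes, uncircled] at hhead
    · rintro rfl
      rw [circledOnes_zero, List.append_nil, List.getLast?_append, uncircled,
        List.getLast?_map] at hlast
      simp at hlast

lemma circledOnes_append_uncircled_ne_circledOnes {a b k : ℕ} {m : List ℕ} (hm : m ≠ []) :
    circledOnes a ++ uncircled m ++ circledOnes b ≠ circledOnes k := by
  intro h
  obtain ⟨x, m, rfl⟩ := List.exists_cons_of_ne_nil hm
  have hx : (x, false) ∈ circledOnes a ++ uncircled (x :: m) ++ circledOnes b := by
    simp [uncircled]
  rw [h] at hx
  simpa using eq_of_mem_circledOnes hx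

def ofBlocks : List ℕ → List (ℕ × Bool)
  | [] => []
  | a :: rest => circledOnes a ++ uncircled rest.dropLast ++ circledOnes (rest.getLastD 0)

@[simp] lemma ofBlocks_singleton (a : ℕ) : ofBlocks [a] = circledOnes a := by
  simp [ofBlocks, circledOnes, uncircled]

@[simp] lemma ofBlocks_cons_append_singleton (a b : ℕ) (m : List ℕ) :
    ofBlocks (a :: (m ++ [b])) = circledOnes a ++ uncircled m ++ circledOnes b := by
  simp [ofBlocks]

lemma image_ofBlocks_eq_consecutiveUncircledComps {n : ℕ} (hn : 0 < n) :
    (fun c : Composition n => ofBlocks c.blocks) '' {c | c.length ≠ 2}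
      = consecutiveUncircledComps n := by
  ext l
  constructor
  · rintro ⟨c, hc, rfl⟩
    rcases c.blocks_eq_of_length_ne_two hn hc with h | ⟨a, m, b, -, h⟩
    · simpa [h] using circledOnes_mem_consecutiveUncircledComps hn
    · have hsum : a + m.sum + b = n := by
        have := c.blocks_sum
        simp only [h, List.sum_cons, List.sum_append, List.sum_nil] at this
        omega
      have hpos : ∀ i ∈ c.blocks, 0 < i := fun i hi => c.one_le_blocks hi
      simp only [h, List.mem_cons, List.mem_append, List.not_mem_nil, or_false] at hpos
      simp only [h, ofBlocks_cons_append_singleton, ← hsum]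
      exact circledOnes_append_uncircled_mem_consecutiveUncircledComps (hpos a (.inl rfl))
        (hpos b (.inr (.inr rfl))) fun x hx => hpos x (.inr (.inl hx))
  · intro hl
    rcases eq_of_mem_consecutiveUncircledComps hl with
      rfl | ⟨a, m, b, ha, hb, hne, hm, hsum, rfl⟩
    · exact ⟨Composition.single n hn, by simp, by simp⟩
    · refine ⟨⟨a :: (m ++ [b]), fun hi => ?_, ?_⟩, by simpa [Composition.length] using hne,
        by simp⟩
      · simp only [List.mem_cons, List.mem_append, List.not_mem_nil, or_false] at hi
        rcases hi with rfl | hi | rfl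
        exacts [ha, hm _ hi, hb]
      · simp only [List.sum_cons, List.sum_append, List.sum_nil]
        omega

lemma injOn_ofBlocks {n : ℕ} (hn : 0 < n) :
    Set.InjOn (fun c : Composition n => ofBlocks c.blocks) {c | c.length ≠ 2} := by
  intro c hc c' hc' h
  apply Composition.ext
  rcases c.blocks_eq_of_length_ne_two hn hc with h1 | ⟨a, m, b, hm, h1⟩ <;>
    rcases c'.blocks_eq_of_length_ne_two hn hc' with h2 | ⟨a', m', b', hm', h2⟩ <;>
    simp only [h1, h2, ofBlocks_singleton, ofBlocks_cons_append_singleton] at h ⊢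
  · exact absurd h.symm (circledOnes_append_uncircled_ne_circledOnes hm')
  · exact absurd h (circledOnes_append_uncircled_ne_circledOnes hm)
  · obtain ⟨rfl, rfl, rfl⟩ := circledOnes_append_uncircled_inj hm hm' h
    rfl

end CircledComp

open CircledComp

/-- For `n ≥ 3`, the number of circled compositions of `n` in which the
uncircled parts occupy consecutive positions is `2^(n-1) - (n-1)`. -/
theorem circled_comp_consecutive_count (n : ℕ) (hn : 3 ≤ n) :
    {l : List (ℕ × Bool) | IsCircledComp n l ∧
      ∃ pre mid post : List (ℕ × Bool), l = pre ++ mid ++ post ∧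
        (∀ p ∈ pre, p.2 = true) ∧ (∀ p ∈ mid, p.2 = false) ∧
        (∀ p ∈ post, p.2 = true)}.ncard
      = 2 ^ (n - 1) - (n - 1) := by
  have hn0 : 0 < n := by omega
  have hcard := Set.ncard_add_ncard_compl {c : Composition n | c.length = 2}
  rw [Composition.ncard_length_eq_two, Nat.card_eq_fintype_card, composition_card] at hcard
  change (consecutiveUncircledComps n).ncard = _
  rw [← image_ofBlocks_eq_consecutiveUncircledComps hn0, (injOn_ofBlocks hn0).ncard_image,
    show {c : Composition n | c.length ≠ 2} = {c | c.length = 2}ᶜ from rfl]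
  omega
end

section
/- For n ≥ 2, the number of circular permutations of [n] avoiding both [1432] and [1324] equals 1 + binomial(n-1, 2). -/
/-!
Represent a circular permutation by its rotation `l` starting with `1`. Every rotation of `1432`
and of `1324` contains `321` or `213`, so if `l` avoids these two linear patterns then `[l]`
avoids `[1432]` and `[1324]`. Conversely an occurrence of `321` or `213` in `l` lies to the right
of the leading `1`, and prefixing it with that `1` gives an occurrence of `1432` or `1324`.

In a permutation avoiding `321` and `213`, the entries before the maximum `n` increase (`213`),
so do those after it (`321`), and no entry before `n` lies between two entries after it (`213`).
Hence the entries after `n` form an interval `(a, c]` and `l = 1 … a, c+1 … n, a+1 … c`. As `l`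
starts with `1`, either the interval is empty and `l` is the identity, or `1 ≤ a < c < n`: this
leaves `1 + C(n-1, 2)` permutations.
-/

open List

theorem isoTo_iff_forall_mem_zip {t p : List ℕ} :
    IsoTo t p ↔ t.length = p.length ∧
      ∀ x ∈ zip t p, ∀ y ∈ zip t p, (x.1 < y.1 ↔ x.2 < y.2) := by
  refine and_congr_right fun hlen => ?_
  simp only [forall_mem_iff_getElem, getElem_zip, length_zip, hlen, Nat.min_self]
  constructor
  · intro h i hi j hj
    simpa [getD_eq_getElem, hlen, hi, hj] using h i j (hlen ▸ hi) (hlen ▸ hj)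
  · intro h i j hi hj
    simpa [getD_eq_getElem, hlen, hi, hj] using h i (hlen ▸ hi) j (hlen ▸ hj)

theorem isoTo_map_fst_map_snd (z : List (ℕ × ℕ)) :
    IsoTo (z.map Prod.fst) (z.map Prod.snd) ↔ ∀ x ∈ z, ∀ y ∈ z, (x.1 < y.1 ↔ x.2 < y.2) := by
  simp [isoTo_iff_forall_mem_zip, zip_map']

instance (t p : List ℕ) : Decidable (IsoTo t p) :=
  decidable_of_iff _ isoTo_iff_forall_mem_zip.symm

instance (σ π : List ℕ) : Decidable (LContains σ π) :=
  decidable_of_iff (∃ t ∈ σ.sublists, IsoTo t π) (by simp [LContains])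

theorem IsoTo.trans {s t p : List ℕ} (h₁ : IsoTo s t) (h₂ : IsoTo t p) : IsoTo s p :=
  ⟨h₁.1.trans h₂.1, fun i j hi hj =>
    (h₁.2 i j hi hj).trans (h₂.2 i j (h₁.1 ▸ hi) (h₁.1 ▸ hj))⟩

theorem IsoTo.exists_sublist {t p s : List ℕ} (h : IsoTo t p) (hs : s <+ p) :
    ∃ u, u <+ t ∧ IsoTo u s := by
  obtain ⟨hlen, hzip⟩ := isoTo_iff_forall_mem_zip.1 h
  rw [← map_snd_zip hlen.ge, sublist_map_iff] at hs
  obtain ⟨z, hz, rfl⟩ := hs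
  refine ⟨z.map Prod.fst, map_fst_zip hlen.le ▸ hz.map _, ?_⟩
  exact (isoTo_map_fst_map_snd z).2 fun x hx y hy => hzip x (hz.subset hx) y (hz.subset hy)

theorem LContains.trans {σ π τ : List ℕ} (h₁ : LContains σ π) (h₂ : LContains π τ) :
    LContains σ τ := by
  obtain ⟨t, htσ, htπ⟩ := h₁
  obtain ⟨s, hsπ, hsτ⟩ := h₂
  obtain ⟨u, hut, hus⟩ := htπ.exists_sublist hsπ
  exact ⟨u, hut.trans htσ, hus.trans hsτ⟩

theorem IsoTo.append_comm {t₁ t₂ p₁ p₂ : List ℕ} (h : IsoTo (t₁ ++ t₂) (p₁ ++ p₂))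
    (h₁ : t₁.length = p₁.length) : IsoTo (t₂ ++ t₁) (p₂ ++ p₁) := by
  have h₂ : t₂.length = p₂.length := by simpa [h₁] using h.1
  rw [isoTo_iff_forall_mem_zip, zip_append h₁] at h
  rw [isoTo_iff_forall_mem_zip, zip_append h₂]
  refine ⟨by simp [h₁, h₂], fun x hx y hy => h.2 x ?_ y ?_⟩ <;> simp_all [or_comm]

theorem LContains.exists_rotate {l π : List ℕ} {k : ℕ} (h : LContains (l.rotate k) π) :
    ∃ m, LContains l (π.rotate m) := by
  obtain ⟨t, ht, hiso⟩ := h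
  rw [rotate_eq_drop_append_take_mod, sublist_append_iff] at ht
  obtain ⟨t₁, t₂, rfl, h₁, h₂⟩ := ht
  have hm : t₁.length ≤ π.length := by simp [← hiso.1]
  refine ⟨t₁.length, t₂ ++ t₁, take_append_drop (k % l.length) l ▸ h₂.append h₁, ?_⟩
  rw [rotate_eq_drop_append_take hm]
  exact (take_append_drop t₁.length π ▸ hiso).append_comm (by simp [hm])

theorem CContains.exists_lcontains_rotate {l π : List ℕ} (hπ : π ≠ []) (h : CContains l π) :
    ∃ m < π.length, LContains l (π.rotate m) := by
  obtain ⟨k, hk⟩ := h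
  obtain ⟨m, hm⟩ := hk.exists_rotate
  exact ⟨m % π.length, Nat.mod_lt _ (length_pos_iff.2 hπ), rotate_mod π m ▸ hm⟩

section Patterns

variable {w x y z : ℕ}

theorem isoTo_321 : IsoTo [x, y, z] [3, 2, 1] ↔ z < y ∧ y < x := by
  simp only [isoTo_iff_forall_mem_zip, length_cons, length_nil, zip_cons_cons, zip_nil_right,
    forall_mem_cons, not_mem_nil, IsEmpty.forall_iff, implies_true, and_true, true_and]
  omega

theorem isoTo_213 : IsoTo [x, y, z] [2, 1, 3] ↔ y < x ∧ x < z := by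
  simp only [isoTo_iff_forall_mem_zip, length_cons, length_nil, zip_cons_cons, zip_nil_right,
    forall_mem_cons, not_mem_nil, IsEmpty.forall_iff, implies_true, and_true, true_and]
  omega

theorem isoTo_1432 : IsoTo [w, x, y, z] [1, 4, 3, 2] ↔ w < z ∧ z < y ∧ y < x := by
  simp only [isoTo_iff_forall_mem_zip, length_cons, length_nil, zip_cons_cons, zip_nil_right,
    forall_mem_cons, not_mem_nil, IsEmpty.forall_iff, implies_true, and_true, true_and]
  omega

theorem isoTo_1324 : IsoTo [w, x, y, z] [1, 3, 2, 4] ↔ w < y ∧ y < x ∧ x < z := by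
  simp only [isoTo_iff_forall_mem_zip, length_cons, length_nil, zip_cons_cons, zip_nil_right,
    forall_mem_cons, not_mem_nil, IsEmpty.forall_iff, implies_true, and_true, true_and]
  omega

end Patterns

theorem lcontains_of_length_eq_three {l p : List ℕ} (hp : p.length = 3) :
    LContains l p ↔ ∃ x y z, [x, y, z] <+ l ∧ IsoTo [x, y, z] p := by
  constructor
  · rintro ⟨t, ht, hiso⟩
    obtain ⟨x, y, z, rfl⟩ := length_eq_three.1 (hiso.1.trans hp)
    exact ⟨x, y, z, ht, hiso⟩
  · rintro ⟨x, y, z, ht, hiso⟩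
    exact ⟨_, ht, hiso⟩

theorem lcontains_321_iff {l : List ℕ} :
    LContains l [3, 2, 1] ↔ ∃ x y z, [x, y, z] <+ l ∧ z < y ∧ y < x := by
  simp only [lcontains_of_length_eq_three (p := [3, 2, 1]) rfl, isoTo_321]

theorem lcontains_213_iff {l : List ℕ} :
    LContains l [2, 1, 3] ↔ ∃ x y z, [x, y, z] <+ l ∧ y < x ∧ x < z := by
  simp only [lcontains_of_length_eq_three (p := [2, 1, 3]) rfl, isoTo_213]

theorem lcontains_321_or_213_of_ccontains {l π : List ℕ}
    (hπ : π = [1, 4, 3, 2] ∨ π = [1, 3, 2, 4]) (h : CContains l π) :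
    LContains l [3, 2, 1] ∨ LContains l [2, 1, 3] := by
  have hrot : ∀ m < π.length,
      LContains (π.rotate m) [3, 2, 1] ∨ LContains (π.rotate m) [2, 1, 3] := by
    rcases hπ with rfl | rfl <;> decide
  obtain ⟨m, hm, hl⟩ := h.exists_lcontains_rotate (by rcases hπ with rfl | rfl <;> simp)
  exact (hrot m hm).imp hl.trans hl.trans

section IsCirc

variable {n : ℕ} {l : List ℕ}

theorem IsCirc.nodup (hl : IsCirc n l) : l.Nodup :=
  hl.1.nodup_iff.2 nodup_range'

theorem IsCirc.mem_iff (hl : IsCirc n l) {x : ℕ} : x ∈ l ↔ 1 ≤ x ∧ x ≤ n := by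
  rw [hl.1.mem_iff, mem_range'_1]; omega

theorem IsCirc.lt_of_mem_append {u v : List ℕ} (hl : IsCirc n (u ++ n :: v)) {x : ℕ}
    (hx : x ∈ u ++ v) : x < n := by
  have hxn : x ≠ n := by
    rintro rfl
    exact (nodup_cons.1 (nodup_middle.1 hl.nodup)).1 hx
  have := hl.mem_iff.1 (by simp only [mem_append, mem_cons] at hx ⊢; tauto)
  omega

theorem IsCirc.eq_one_cons (hl : IsCirc n l) : ∃ t, l = 1 :: t ∧ ∀ x ∈ t, 1 < x := by
  obtain ⟨t, rfl⟩ : ∃ t, l = 1 :: t := by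
    rcases l with _ | ⟨a, t⟩ <;> simp_all [IsCirc]
  refine ⟨t, rfl, fun x hx => ?_⟩
  have h1 : 1 ≤ x := (hl.mem_iff.1 (mem_cons_of_mem 1 hx)).1
  have hne : x ≠ 1 := fun h => (nodup_cons.1 hl.nodup).1 (h ▸ hx)
  omega

theorem IsCirc.one_cons_sublist (hl : IsCirc n l) {x y z : ℕ} (hs : [x, y, z] <+ l)
    (hyx : y < x) : [1, x, y, z] <+ l ∧ 1 < y ∧ 1 < z := by
  obtain ⟨t, rfl, ht⟩ := hl.eq_one_cons
  rcases sublist_cons_iff.1 hs with hs | ⟨r, hr, hr'⟩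
  · exact ⟨hs.cons_cons 1, ht y (hs.subset (by simp)), ht z (hs.subset (by simp))⟩
  · obtain ⟨rfl, rfl⟩ := cons_eq_cons.1 hr
    exact absurd (ht y (hr'.subset (by simp))) (by omega)

theorem IsCirc.not_ccontains_iff (hl : IsCirc n l) :
    (¬ CContains l [1, 4, 3, 2] ∧ ¬ CContains l [1, 3, 2, 4]) ↔
      (¬ LContains l [3, 2, 1] ∧ ¬ LContains l [2, 1, 3]) := by
  constructor
  · rintro ⟨h1432, h1324⟩
    constructor
    · rw [lcontains_321_iff]
      rintro ⟨x, y, z, hs, hzy, hyx⟩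
      obtain ⟨hs', -, hz⟩ := hl.one_cons_sublist hs hyx
      exact h1432 ⟨0, _, by rwa [rotate_zero], isoTo_1432.2 ⟨hz, hzy, hyx⟩⟩
    · rw [lcontains_213_iff]
      rintro ⟨x, y, z, hs, hyx, hxz⟩
      obtain ⟨hs', hy, -⟩ := hl.one_cons_sublist hs hyx
      exact h1324 ⟨0, _, by rwa [rotate_zero], isoTo_1324.2 ⟨hy, hyx, hxz⟩⟩
  · rintro ⟨h321, h213⟩
    exact ⟨fun h => (lcontains_321_or_213_of_ccontains (.inl rfl) h).elim h321 h213,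
      fun h => (lcontains_321_or_213_of_ccontains (.inr rfl) h).elim h321 h213⟩

end IsCirc

/-- The order listing first the numbers outside `(a, c]`, then those inside, each part
increasingly. -/
def BlockLastLT (a c x y : ℕ) : Prop :=
  (¬ (a < x ∧ x ≤ c) ∧ a < y ∧ y ≤ c) ∨ ((a < x ∧ x ≤ c ↔ a < y ∧ y ≤ c) ∧ x < y)

def moveBlockToEnd (n a c : ℕ) : List ℕ :=
  range' 1 a ++ range' (c + 1) (n - c) ++ range' (a + 1) (c - a)

section Block

variable {n a c : ℕ}

theorem pairwise_blockLastLT_append {s t : List ℕ} (hs : s.Pairwise (· < ·))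
    (ht : t.Pairwise (· < ·)) (hs_out : ∀ x ∈ s, ¬ (a < x ∧ x ≤ c))
    (ht_in : ∀ y ∈ t, a < y ∧ y ≤ c) : (s ++ t).Pairwise (BlockLastLT a c) := by
  refine pairwise_append.2 ⟨?_, ?_, fun x hx y hy => .inl ⟨hs_out x hx, ht_in y hy⟩⟩
  · exact hs.imp_of_mem fun hx hy hxy => .inr ⟨iff_of_false (hs_out _ hx) (hs_out _ hy), hxy⟩
  · exact ht.imp_of_mem fun hx hy hxy => .inr ⟨iff_of_true (ht_in _ hx) (ht_in _ hy), hxy⟩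

theorem not_lcontains_of_pairwise_blockLastLT {l : List ℕ} (h : l.Pairwise (BlockLastLT a c)) :
    ¬ LContains l [3, 2, 1] ∧ ¬ LContains l [2, 1, 3] := by
  have htriple : ∀ {x y z}, [x, y, z] <+ l →
      BlockLastLT a c x y ∧ BlockLastLT a c x z ∧ BlockLastLT a c y z := fun hs => by
    simpa [and_assoc] using h.sublist hs
  rw [lcontains_321_iff, lcontains_213_iff]
  constructor <;> rintro ⟨x, y, z, hs, h₁, h₂⟩ <;>
    obtain ⟨hxy, hxz, hyz⟩ := htriple hs <;> simp only [BlockLastLT] at hxy hxz hyz <;> omega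

theorem perm_moveBlockToEnd (hac : a ≤ c) (hcn : c ≤ n) :
    moveBlockToEnd n a c ~ range' 1 n := by
  calc moveBlockToEnd n a c
      ~ range' 1 a ++ range' (a + 1) (c - a) ++ range' (c + 1) (n - c) := by
        rw [moveBlockToEnd, append_assoc, append_assoc]
        exact perm_append_comm.append_left _
    _ = range' 1 n := by
        rw [Nat.add_comm a 1, range'_append_1, Nat.add_sub_cancel' hac, Nat.add_comm c 1,
          range'_append_1, Nat.add_sub_cancel' hcn]

theorem pairwise_moveBlockToEnd (hac : a ≤ c) :
    (moveBlockToEnd n a c).Pairwise (BlockLastLT a c) := by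
  refine pairwise_blockLastLT_append ?_ pairwise_lt_range' ?_ ?_
  · refine pairwise_append.2 ⟨pairwise_lt_range', pairwise_lt_range', fun x hx y hy => ?_⟩
    simp only [mem_range'_1] at hx hy; omega
  · intro x hx; simp only [mem_append, mem_range'_1] at hx; omega
  · intro y hy; simp only [mem_range'_1] at hy; omega

theorem eq_moveBlockToEnd_of_pairwise {l : List ℕ} (hperm : l ~ range' 1 n)
    (h : l.Pairwise (BlockLastLT a c)) (hac : a ≤ c) (hcn : c ≤ n) : l = moveBlockToEnd n a c :=
  (hperm.trans (perm_moveBlockToEnd hac hcn).symm).eq_of_pairwise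
    (fun x y _ _ hxy hyx => by simp only [BlockLastLT] at hxy hyx; omega)
    h (pairwise_moveBlockToEnd hac)

theorem getElem?_moveBlockToEnd_of_lt {i : ℕ} (hi : i < a) :
    (moveBlockToEnd n a c)[i]? = some (i + 1) := by
  rw [moveBlockToEnd, append_assoc, getElem?_append_left (by simpa), getElem?_range' hi]
  simp [Nat.add_comm]

theorem getElem?_moveBlockToEnd_self (hcn : c < n) :
    (moveBlockToEnd n a c)[a]? = some (c + 1) := by
  rw [moveBlockToEnd, append_assoc, getElem?_append_right (by simp), length_range', Nat.sub_self,
    getElem?_append_left (by rw [length_range']; omega), getElem?_range' (by omega)]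

theorem isCirc_moveBlockToEnd (ha : 1 ≤ a) (hac : a ≤ c) (hcn : c ≤ n) :
    IsCirc n (moveBlockToEnd n a c) :=
  ⟨perm_moveBlockToEnd hac hcn, by rw [head?_eq_getElem?, getElem?_moveBlockToEnd_of_lt ha]⟩

theorem moveBlockToEnd_ne_range' (hac : a < c) (hcn : c < n) :
    moveBlockToEnd n a c ≠ range' 1 n := fun h => by
  have := getElem?_moveBlockToEnd_self (a := a) hcn
  rw [h, getElem?_range' (by omega), Option.some.injEq] at this
  omega

theorem moveBlockToEnd_ne_of_lt {a' c' : ℕ} (hac : a < c) (hcn : c < n) (ha : a < a') :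
    moveBlockToEnd n a c ≠ moveBlockToEnd n a' c' := fun h => by
  have := getElem?_moveBlockToEnd_self (a := a) hcn
  rw [h, getElem?_moveBlockToEnd_of_lt ha, Option.some.injEq] at this
  omega

theorem injOn_moveBlockToEnd :
    Set.InjOn (fun p : ℕ × ℕ => moveBlockToEnd n p.1 p.2) {p | p.1 < p.2 ∧ p.2 < n} := by
  rintro ⟨a, c⟩ ⟨hac, hcn⟩ ⟨a', c'⟩ ⟨hac', hcn'⟩ h
  simp only at hac hcn hac' hcn' h
  obtain rfl : a = a' := by
    by_contra hne
    rcases Nat.lt_or_gt_of_ne hne with hlt | hlt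
    exacts [moveBlockToEnd_ne_of_lt hac hcn hlt h, moveBlockToEnd_ne_of_lt hac' hcn' hlt h.symm]
  have := getElem?_moveBlockToEnd_self (a := a) hcn
  rw [h, getElem?_moveBlockToEnd_self hcn', Option.some.injEq] at this
  simp only [Prod.mk.injEq, true_and]
  omega

end Block

theorem pairwise_lt_of_not_lcontains_213 {u v : List ℕ} {m : ℕ}
    (h : ¬ LContains (u ++ m :: v) [2, 1, 3]) (hu : ∀ x ∈ u, x < m) (hnd : u.Nodup) :
    u.Pairwise (· < ·) := by
  refine pairwise_iff_forall_sublist.2 fun {x y} hxy => ?_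
  have hne : x ≠ y := by simpa using hxy.nodup hnd
  by_contra hyx
  refine h (lcontains_213_iff.2 ⟨x, y, m, ?_, by omega, hu x (hxy.subset (by simp))⟩)
  simpa using hxy.append ((nil_sublist v).cons_cons m)

theorem pairwise_lt_of_not_lcontains_321 {u v : List ℕ} {m : ℕ}
    (h : ¬ LContains (u ++ m :: v) [3, 2, 1]) (hv : ∀ x ∈ v, x < m) (hnd : v.Nodup) :
    v.Pairwise (· < ·) := by
  refine pairwise_iff_forall_sublist.2 fun {x y} hxy => ?_
  have hne : x ≠ y := by simpa using hxy.nodup hnd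
  by_contra hyx
  exact h (lcontains_321_iff.2 ⟨m, x, y, (hxy.cons_cons m).trans (sublist_append_right u _),
    by omega, hv x (hxy.subset (by simp))⟩)

theorem lt_or_getLast_lt_of_not_lcontains_213 {u w : List ℕ} {m b x : ℕ}
    (h : ¬ LContains (u ++ m :: b :: w) [2, 1, 3]) (hnd : (u ++ m :: b :: w).Nodup)
    (hx : x ∈ u) : x < b ∨ (b :: w).getLast (cons_ne_nil b w) < x := by
  set c := (b :: w).getLast (cons_ne_nil b w)
  have hxv : x ∉ b :: w := fun h => (nodup_append.1 hnd).2.2 x hx x (mem_cons_of_mem m h) rfl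
  by_contra! hbxc
  have hbx : b < x := lt_of_le_of_ne hbxc.1 fun h => hxv (h ▸ mem_cons_self)
  have hxc : x < c := lt_of_le_of_ne hbxc.2 fun h => hxv (h ▸ getLast_mem _)
  have hcw : c ∈ w := (mem_cons.1 (getLast_mem (cons_ne_nil b w))).resolve_left (by omega)
  have hs : [x, b, c] <+ u ++ m :: b :: w :=
    (singleton_sublist.2 hx).append (((singleton_sublist.2 hcw).cons_cons b).cons m)
  exact h (lcontains_213_iff.2 ⟨x, b, c, hs, hbx, hxc⟩)

theorem IsCirc.eq_range'_or_eq_moveBlockToEnd {n : ℕ} {l : List ℕ} (hl : IsCirc n l)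
    (h321 : ¬ LContains l [3, 2, 1]) (h213 : ¬ LContains l [2, 1, 3]) :
    l = range' 1 n ∨ ∃ a c, 1 ≤ a ∧ a < c ∧ c < n ∧ l = moveBlockToEnd n a c := by
  have hn : 1 ≤ n := (hl.mem_iff.1 (mem_of_mem_head? hl.2)).2
  obtain ⟨u, v, rfl⟩ := append_of_mem (hl.mem_iff.2 ⟨hn, le_rfl⟩)
  have hnd := (nodup_append.1 (nodup_cons.1 (nodup_middle.1 hl.nodup)).2)
  have hu := pairwise_lt_of_not_lcontains_213 h213
    (fun x hx => hl.lt_of_mem_append (mem_append_left v hx)) hnd.1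
  have hv := pairwise_lt_of_not_lcontains_321 h321
    (fun x hx => hl.lt_of_mem_append (mem_append_right u hx)) hnd.2.1
  have hun : (u ++ [n]).Pairwise (· < ·) :=
    pairwise_append.2 ⟨hu, pairwise_singleton _ _, fun x hx y hy => by
      rw [mem_singleton.1 hy]; exact hl.lt_of_mem_append (mem_append_left v hx)⟩
  rcases v with _ | ⟨b, w⟩
  · left
    exact hl.1.eq_of_pairwise (fun x y _ _ hxy hyx => by omega) hun pairwise_lt_range'
  right
  set c := (b :: w).getLast (cons_ne_nil b w)
  have hv_mem : ∀ y ∈ b :: w, b ≤ y ∧ y ≤ c := fun y hy =>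
    ⟨(mem_cons.1 hy).elim ge_of_eq fun hy => ((pairwise_cons.1 hv).1 y hy).le,
      (hv.imp le_of_lt).rel_getLast hy⟩
  have hbc : b ≤ c := (hv_mem c (getLast_mem _)).1
  have hb : 1 ≤ b := (hl.mem_iff.1 (by simp)).1
  have hcn : c < n := hl.lt_of_mem_append (mem_append_right u (getLast_mem _))
  have heq : u ++ n :: b :: w = moveBlockToEnd n (b - 1) c := by
    refine eq_moveBlockToEnd_of_pairwise hl.1 ?_ (by omega) hcn.le
    rw [← singleton_append, ← append_assoc]
    refine pairwise_blockLastLT_append hun hv (fun x hx => ?_) fun y hy => ?_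
    · rcases mem_append.1 hx with hx | hx
      · have := lt_or_getLast_lt_of_not_lcontains_213 h213 hl.nodup hx; omega
      · rw [mem_singleton.1 hx]; omega
    · have := hv_mem y hy; omega
  refine ⟨b - 1, c, ?_, by omega, hcn, heq⟩
  by_contra ha
  have ha0 : b - 1 = 0 := by omega
  have hhead := hl.2
  rw [heq, head?_eq_getElem?, ← ha0, getElem?_moveBlockToEnd_self hcn, Option.some.injEq] at hhead
  omega

theorem setOf_isCirc_avoiding_eq {n : ℕ} (hn : 1 ≤ n) :
    {l | IsCirc n l ∧ ¬ LContains l [3, 2, 1] ∧ ¬ LContains l [2, 1, 3]} =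
      ↑(insert (range' 1 n) ({p ∈ Finset.Icc 1 (n - 1) ×ˢ Finset.Icc 1 (n - 1) | p.1 < p.2}.image
        fun p => moveBlockToEnd n p.1 p.2)) := by
  ext l
  simp only [Set.mem_ofPred_eq, Finset.coe_insert, Finset.coe_image, Finset.coe_filter,
    Finset.mem_product, Finset.mem_Icc, Set.mem_insert_iff, Set.mem_image, Prod.exists]
  constructor
  · rintro ⟨hl, h321, h213⟩
    refine (hl.eq_range'_or_eq_moveBlockToEnd h321 h213).imp id ?_
    rintro ⟨a, c, ha, hac, hcn, rfl⟩
    exact ⟨a, c, ⟨⟨⟨ha, by omega⟩, by omega, by omega⟩, hac⟩, rfl⟩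
  · rintro (rfl | ⟨a, c, ⟨⟨⟨ha, -⟩, -, hcn⟩, hac⟩, rfl⟩)
    · refine ⟨⟨Perm.refl _, by rw [head?_range', if_neg (by omega)]⟩,
        not_lcontains_of_pairwise_blockLastLT (a := 0) (c := 0) ?_⟩
      exact Pairwise.imp (fun hxy => .inr ⟨by omega, hxy⟩) pairwise_lt_range'
    · exact ⟨isCirc_moveBlockToEnd ha hac.le (by omega),
        not_lcontains_of_pairwise_blockLastLT (pairwise_moveBlockToEnd hac.le)⟩

/-- For `n ≥ 2`, the number of circular permutations of `[n]` avoiding both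
`[1432]` and `[1324]` is `1 + C(n-1, 2)`. -/
theorem avoid_1432_1324_count (n : ℕ) (hn : 2 ≤ n) :
    {l : List ℕ | IsCirc n l ∧ ¬ CContains l [1, 4, 3, 2] ∧
      ¬ CContains l [1, 3, 2, 4]}.ncard = 1 + (n - 1).choose 2 := by
  have hS : {l : List ℕ | IsCirc n l ∧ ¬ CContains l [1, 4, 3, 2] ∧ ¬ CContains l [1, 3, 2, 4]} =
      {l | IsCirc n l ∧ ¬ LContains l [3, 2, 1] ∧ ¬ LContains l [2, 1, 3]} :=
    Set.ext fun l => and_congr_right fun hl => hl.not_ccontains_iff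
  rw [hS, setOf_isCirc_avoiding_eq (by omega), Set.ncard_coe_finset, Finset.card_insert_of_notMem,
    Finset.card_image_of_injOn, Finset.card_product_filter_lt, Nat.card_Icc, Nat.add_sub_cancel,
    add_comm]
  · refine injOn_moveBlockToEnd.mono fun p hp => ?_
    simp only [Finset.coe_filter, Finset.mem_product, Finset.mem_Icc, Set.mem_ofPred_eq] at hp ⊢
    omega
  · simp only [Finset.mem_image, Finset.mem_filter, Finset.mem_product, Finset.mem_Icc, not_exists,
      not_and]
    intro p hp
    exact moveBlockToEnd_ne_range' hp.2 (by omega)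
end

section
/- The cyclic descent polynomial for [1324] satisfies D_n([1324]; q) = sum over i from 1 to n-1 of binomial(n+i-3, n-i-1) q^i, i.e., for n ≥ 2, the number of [1324]-avoiding circular permutations of [n] with exactly i cyclic descents equals binomial(n+i-3, n-i-1). -/
/-- The number of cyclic descents of the circular permutation represented by
the list `l`: indices `i` with `l_i > l_(i+1)`, indices taken cyclically. -/
def cdes (l : List ℕ) : ℕ :=
  ((Finset.range l.length).filter
    (fun i => l.getD ((i + 1) % l.length) 0 < l.getD i 0)).card

/-!
Rotate a circular permutation so that it reads `σ = 1 w`. Every cyclic occurrence of `1324` in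
`σ` yields an occurrence of `213` or `4132` in `w`, and conversely. Writing `w = u n v`, avoiding
these forces `u` to be increasing, `v` to avoid `132` and `213`, and every value lying between two
increasing entries of `v` to belong to `v`. Hence `v` is a sequence of runs of consecutive
integers, each run below the previous one, and `u` is the increasing list of the remaining values.
Such a `σ` has one cyclic descent entering each run plus the descent back to `1`, so `i` cyclic
descents correspond to `i - 1` runs in `[2, n - 1]`; summing over the first run shows that there
are `C(n + i - 3, 2i - 2) = C(n + i - 3, n - i - 1)` such sequences.
-/

namespace List

variable {α : Type*}

theorem exists_sublist_rotate_iff {s l : List α} :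
    (∃ k, s <+ l.rotate k) ↔ ∃ k, s.rotate k <+ l := by
  constructor
  · rintro ⟨k, h⟩
    rw [rotate_eq_drop_append_take_mod, sublist_append_iff] at h
    obtain ⟨s₁, s₂, rfl, h₁, h₂⟩ := h
    refine ⟨s₁.length, ?_⟩
    rw [rotate_append_length_eq]
    simpa only [take_append_drop] using h₂.append h₁
  · rintro ⟨k, h⟩
    rw [rotate_eq_drop_append_take_mod, append_sublist_iff] at h
    obtain ⟨r₁, r₂, rfl, h₁, h₂⟩ := h
    refine ⟨r₁.length, ?_⟩
    rw [rotate_append_length_eq]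
    simpa only [take_append_drop] using h₂.append h₁

theorem pair_sublist_append_cases {x y : α} {A B : List α} (h : [x, y] <+ A ++ B) :
    [x, y] <+ A ∨ (x ∈ A ∧ y ∈ B) ∨ [x, y] <+ B := by
  obtain ⟨l₁, l₂, e, h₁, h₂⟩ := sublist_append_iff.mp h
  replace e := e.symm
  rcases l₁ with _ | ⟨_, _ | ⟨_, _ | ⟨_, _⟩⟩⟩ <;> simp_all

theorem triple_sublist_append_cases {x y z : α} {A B : List α} (h : [x, y, z] <+ A ++ B) :
    [x, y, z] <+ A ∨ ([x, y] <+ A ∧ z ∈ B) ∨ (x ∈ A ∧ [y, z] <+ B) ∨ [x, y, z] <+ B := by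
  obtain ⟨l₁, l₂, e, h₁, h₂⟩ := sublist_append_iff.mp h
  replace e := e.symm
  rcases l₁ with _ | ⟨_, _ | ⟨_, _ | ⟨_, _ | ⟨_, _⟩⟩⟩⟩ <;> simp_all

theorem quadruple_sublist_append_cases {x y z w : α} {A B : List α}
    (h : [x, y, z, w] <+ A ++ B) :
    [x, y, z, w] <+ A ∨ ([x, y, z] <+ A ∧ w ∈ B) ∨ ([x, y] <+ A ∧ [z, w] <+ B) ∨
      (x ∈ A ∧ [y, z, w] <+ B) ∨ [x, y, z, w] <+ B := by
  obtain ⟨l₁, l₂, e, h₁, h₂⟩ := sublist_append_iff.mp h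
  replace e := e.symm
  rcases l₁ with _ | ⟨_, _ | ⟨_, _ | ⟨_, _ | ⟨_, _ | ⟨_, _⟩⟩⟩⟩⟩ <;> simp_all

end List

open List

namespace Cdes1324

theorem lcontains_1324_iff {σ : List ℕ} :
    LContains σ [1, 3, 2, 4] ↔
      ∃ a b c d, a < c ∧ c < b ∧ b < d ∧ [a, b, c, d] <+ σ := by
  constructor
  · rintro ⟨t, hsub, hlen, hiso⟩
    match t, hlen with
    | [a, b, c, d], _ =>
      have hac := (hiso 0 2 (by simp) (by simp)).mpr (by simp)
      have hcb := (hiso 2 1 (by simp) (by simp)).mpr (by simp)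
      have hbd := (hiso 1 3 (by simp) (by simp)).mpr (by simp)
      exact ⟨a, b, c, d, hac, hcb, hbd, hsub⟩
  · rintro ⟨a, b, c, d, hac, hcb, hbd, hsub⟩
    refine ⟨[a, b, c, d], hsub, rfl, fun i j hi hj => ?_⟩
    simp only [length_cons, length_nil] at hi hj
    interval_cases i <;> interval_cases j <;> simp <;> omega

theorem ccontains_1324_iff {σ : List ℕ} :
    CContains σ [1, 3, 2, 4] ↔ ∃ a b c d, a < c ∧ c < b ∧ b < d ∧
      ([a, b, c, d] <+ σ ∨ [b, c, d, a] <+ σ ∨ [c, d, a, b] <+ σ ∨ [d, a, b, c] <+ σ) := by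
  have rotations : ∀ a b c d : ℕ, (∃ k, [a, b, c, d] <+ σ.rotate k) ↔
      ([a, b, c, d] <+ σ ∨ [b, c, d, a] <+ σ ∨ [c, d, a, b] <+ σ ∨ [d, a, b, c] <+ σ) := by
    intro a b c d
    rw [exists_sublist_rotate_iff]
    constructor
    · rintro ⟨k, h⟩
      rw [← rotate_mod] at h
      have hk : k % 4 < 4 := Nat.mod_lt _ (by norm_num)
      interval_cases k % 4 <;> simp_all [rotate]
    · rintro (h | h | h | h)
      exacts [⟨0, h⟩, ⟨1, h⟩, ⟨2, h⟩, ⟨3, h⟩]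
  simp only [CContains, lcontains_1324_iff, ← rotations]
  exact ⟨fun ⟨k, a, b, c, d, hac, hcb, hbd, h⟩ => ⟨a, b, c, d, hac, hcb, hbd, k, h⟩,
    fun ⟨a, b, c, d, hac, hcb, hbd, k, h⟩ => ⟨k, a, b, c, d, hac, hcb, hbd, h⟩⟩

def Has213 (w : List ℕ) : Prop := ∃ x y z, y < x ∧ x < z ∧ [x, y, z] <+ w

def Has132 (w : List ℕ) : Prop := ∃ x y z, x < z ∧ z < y ∧ [x, y, z] <+ w

def Has4132 (w : List ℕ) : Prop := ∃ a b c d, b < d ∧ d < c ∧ c < a ∧ [a, b, c, d] <+ w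

theorem Has213.mono {v w : List ℕ} (h : Has213 v) (hvw : v <+ w) : Has213 w :=
  let ⟨x, y, z, h₁, h₂, hs⟩ := h; ⟨x, y, z, h₁, h₂, hs.trans hvw⟩

theorem Has132.mono {v w : List ℕ} (h : Has132 v) (hvw : v <+ w) : Has132 w :=
  let ⟨x, y, z, h₁, h₂, hs⟩ := h; ⟨x, y, z, h₁, h₂, hs.trans hvw⟩

def BetweenClosed (v : List ℕ) : Prop :=
  ∀ ⦃y z⦄, [y, z] <+ v → ∀ ⦃x⦄, y ≤ x → x ≤ z → x ∈ v

theorem ccontains_cons_one_iff {w : List ℕ} (hw : ∀ x ∈ w, 2 ≤ x) :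
    CContains (1 :: w) [1, 3, 2, 4] ↔ Has213 w ∨ Has4132 w := by
  have drop_one : ∀ {x : ℕ} {l : List ℕ}, x :: l <+ 1 :: w → x ≠ 1 → x :: l <+ w :=
    fun h hx => by simpa [hx] using sublist_cons_iff.mp h
  rw [ccontains_1324_iff]
  constructor
  · rintro ⟨a, b, c, d, hac, hcb, hbd, h | h | h | h⟩
    · exact Or.inl ⟨b, c, d, hcb, hbd, h.tail⟩
    · exact Or.inl ⟨b, c, d, hcb, hbd, (by simp : _ <+ _).trans (drop_one h (by omega))⟩
    · have ha : 1 ≤ a := by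
        rcases mem_cons.mp (h.subset (by simp) : a ∈ 1 :: w) with rfl | ha
        exacts [le_rfl, by have := hw a ha; omega]
      exact Or.inl ⟨c, a, b, hac, hcb, (by simp : _ <+ _).trans (drop_one h (by omega))⟩
    · exact Or.inr ⟨d, a, b, c, hac, hcb, hbd, drop_one h (by omega)⟩
  · rintro (⟨x, y, z, hyx, hxz, h⟩ | ⟨d, a, b, c, hac, hcb, hbd, h⟩)
    · have hy := hw y (h.subset (by simp))
      exact ⟨1, x, y, z, by omega, hyx, hxz, Or.inl (h.cons_cons 1)⟩
    · exact ⟨a, b, c, d, hac, hcb, hbd, Or.inr (Or.inr (Or.inr (h.cons 1)))⟩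

theorem range'_append_inj {s m m' : ℕ} {X Y : List ℕ} (hX : ∀ x ∈ X, x < s)
    (hY : ∀ y ∈ Y, y < s) (h : range' s m ++ X = range' s m' ++ Y) : m = m' ∧ X = Y := by
  have split : ∀ k (Z : List ℕ), (∀ z ∈ Z, z < s) →
      (range' s k ++ Z).filter (s ≤ ·) = range' s k ∧ (range' s k ++ Z).filter (· < s) = Z := by
    intro k Z hZ
    simp only [filter_append]
    constructor
    · rw [filter_eq_self.mpr (by simp +contextual), filter_eq_nil_iff.mpr (by grind), append_nil]
    · rw [filter_eq_nil_iff.mpr (by simp +contextual), filter_eq_self.mpr (by grind), nil_append]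
  obtain ⟨hm, hX'⟩ := split m X hX
  obtain ⟨hm', hY'⟩ := split m' Y hY
  rw [h] at hm hX'
  rw [hm] at hm'
  exact ⟨by simpa using congrArg length hm', hX'.symm.trans hY'⟩

def blocks (P : List (ℕ × ℕ)) : List ℕ := P.flatMap fun p => range' p.1 p.2

@[simp] theorem blocks_nil : blocks [] = [] := rfl

@[simp] theorem blocks_cons (a ℓ : ℕ) (P : List (ℕ × ℕ)) :
    blocks ((a, ℓ) :: P) = range' a ℓ ++ blocks P := rfl

/-- `IsBlockSeq t [(a₁, ℓ₁), (a₂, ℓ₂), …]`: the runs `[aₖ, aₖ + ℓₖ)` of consecutive integers are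
nonempty, lie in `[2, t]`, and each lies below the previous one. -/
inductive IsBlockSeq : ℕ → List (ℕ × ℕ) → Prop
  | nil (t : ℕ) : IsBlockSeq t []
  | cons {t a ℓ : ℕ} {P : List (ℕ × ℕ)} :
      2 ≤ a → 1 ≤ ℓ → a + ℓ ≤ t + 1 → IsBlockSeq (a - 1) P → IsBlockSeq t ((a, ℓ) :: P)

namespace IsBlockSeq

variable {t : ℕ} {P : List (ℕ × ℕ)}

theorem bounds (h : IsBlockSeq t P) : ∀ x ∈ blocks P, 2 ≤ x ∧ x ≤ t := by
  induction h with
  | nil => simp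
  | cons _ _ _ _ ih =>
    intro x hx
    rcases mem_append.mp hx with hx | hx
    · rw [mem_range'_1] at hx; omega
    · have := ih x hx; omega

theorem of_blocks_le {s : ℕ} (h : IsBlockSeq t P) (hs : ∀ x ∈ blocks P, x ≤ s) :
    IsBlockSeq s P := by
  cases h with
  | nil => exact nil s
  | @cons _ a ℓ _ ha hℓ _ hP =>
    have := hs (a + ℓ - 1) (mem_append_left _ (mem_range'_1.mpr (by omega)))
    exact cons ha hℓ (by omega) hP

theorem nodup_blocks (h : IsBlockSeq t P) : (blocks P).Nodup := by
  induction h with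
  | nil => simp
  | cons _ _ _ hP ih =>
    refine (nodup_range' ..).append ih fun x hx hx' => ?_
    rw [mem_range'_1] at hx
    have := hP.bounds x hx'
    omega

theorem betweenClosed (h : IsBlockSeq t P) : BetweenClosed (blocks P) := by
  intro y z hyz x hyx hxz
  induction h with
  | nil => simp at hyz
  | cons _ _ _ hP ih =>
    simp only [blocks_cons, mem_append] at hyz ⊢
    rcases pair_sublist_append_cases hyz with h' | ⟨hy, hz⟩ | h'
    · have hy := mem_range'_1.mp (h'.subset (by simp : y ∈ [y, z]))
      have hz := mem_range'_1.mp (h'.subset (by simp : z ∈ [y, z]))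
      exact Or.inl (mem_range'_1.mpr (by omega))
    · rw [mem_range'_1] at hy
      have := hP.bounds z hz
      omega
    · exact Or.inr (ih h')

theorem lt_of_triple_sublist (h : IsBlockSeq t P) {x y z : ℕ} (hs : [x, y, z] <+ blocks P)
    (hxz : x < z) : x < y ∧ y < z := by
  induction h with
  | nil => simp at hs
  | cons _ _ _ hP ih =>
    rw [blocks_cons] at hs
    rcases triple_sublist_append_cases hs with h' | ⟨h', hz⟩ | ⟨hx, h'⟩ | h'
    · have := (pairwise_lt_range' ..).sublist h'
      simp at this; omega
    · have hx := mem_range'_1.mp (h'.subset (by simp : x ∈ [x, y]))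
      have := hP.bounds z hz
      omega
    · rw [mem_range'_1] at hx
      have := hP.bounds z (h'.subset (by simp : z ∈ [y, z]))
      omega
    · exact ih h'

theorem not_has213 (h : IsBlockSeq t P) : ¬ Has213 (blocks P) := fun ⟨_, _, _, hyx, hxz, hs⟩ =>
  absurd (h.lt_of_triple_sublist hs hxz).1 hyx.not_gt

theorem not_has132 (h : IsBlockSeq t P) : ¬ Has132 (blocks P) := fun ⟨_, _, _, hxz, hzy, hs⟩ =>
  absurd (h.lt_of_triple_sublist hs hxz).2 hzy.not_gt

theorem eq_of_blocks_eq {t' : ℕ} {Q : List (ℕ × ℕ)} (hP : IsBlockSeq t P) (hQ : IsBlockSeq t' Q)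
    (h : blocks P = blocks Q) : P = Q := by
  induction hP generalizing t' Q with
  | nil =>
    cases hQ with
    | nil => rfl
    | cons _ hℓ _ _ => simp at h; omega
  | @cons _ a ℓ _ _ hℓ _ hP ih =>
    cases hQ with
    | nil => simp at h; omega
    | @cons _ a' ℓ' _ _ hℓ' _ hQ =>
      have head_eq : ∀ b k (X : List ℕ), 1 ≤ k → (range' b k ++ X).head? = some b := by
        intro b k X hk
        obtain ⟨k, rfl⟩ := Nat.exists_eq_add_of_le' hk
        simp [range'_succ]
      rw [blocks_cons, blocks_cons] at h
      obtain rfl : a = a' := by simpa [head_eq _ _ _ hℓ, head_eq _ _ _ hℓ'] using congrArg head? h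
      have below : ∀ {R}, IsBlockSeq (a - 1) R → ∀ x ∈ blocks R, x < a := fun hR x hx => by
        have := hR.bounds x hx; omega
      obtain ⟨rfl, hPQ⟩ := range'_append_inj (below hP) (below hQ) h
      rw [ih hQ hPQ]

end IsBlockSeq

theorem exists_blocks_eq_cons {t c : ℕ} {P : List (ℕ × ℕ)} (hP : IsBlockSeq t P)
    (hc : 2 ≤ c ∧ c ≤ t) (hcP : c ∉ blocks P) (h132 : ¬ Has132 (c :: blocks P))
    (hclosed : BetweenClosed (c :: blocks P)) :
    ∃ Q, IsBlockSeq t Q ∧ c :: blocks P = blocks Q := by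
  cases hP with
  | nil => exact ⟨[(c, 1)], .cons hc.1 le_rfl (by omega) (.nil _), rfl⟩
  | @cons _ a ℓ R ha hℓ hat hR =>
    rw [blocks_cons, mem_append, mem_range'_1, not_or] at hcP
    by_cases hca : c + 1 = a
    · refine ⟨(c, ℓ + 1) :: R, .cons hc.1 (by omega) (by omega) (hR.of_blocks_le ?_), ?_⟩
      · intro x hx
        have := hR.bounds x hx
        have : x ≠ c := fun hxc => hcP.2 (hxc ▸ hx)
        omega
      · simp [range'_succ, hca]
    · -- `c` cannot lie below the block `[a, a + ℓ)`: then `c + 1` would sit further right,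
      -- below `a`, giving the pattern `c a (c + 1)`.
      have hac : a + ℓ ≤ c := by
        by_contra! hlt
        have hca : c + 1 < a := by omega
        have ha_mem : a ∈ blocks ((a, ℓ) :: R) := by simp; omega
        have hc1 := hclosed ((singleton_sublist.mpr ha_mem).cons_cons c)
          (x := c + 1) (by omega) (by omega)
        simp only [blocks_cons, mem_cons, mem_append, mem_range'_1] at hc1
        rcases hc1 with _ | _ | hc1
        · omega
        · omega
        · exact h132 ⟨c, a, c + 1, by omega, by omega, ((singleton_sublist.mpr
            (mem_range'_1.mpr ⟨le_rfl, by omega⟩)).append (singleton_sublist.mpr hc1)).cons_cons c⟩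
      exact ⟨(c, 1) :: (a, ℓ) :: R, .cons hc.1 le_rfl (by omega) (.cons ha hℓ (by omega) hR), rfl⟩

theorem exists_blocks_eq {t : ℕ} {v : List ℕ} (hnd : v.Nodup) (h213 : ¬ Has213 v)
    (h132 : ¬ Has132 v) (hclosed : BetweenClosed v) (hbd : ∀ x ∈ v, 2 ≤ x ∧ x ≤ t) :
    ∃ P, IsBlockSeq t P ∧ v = blocks P := by
  induction v with
  | nil => exact ⟨[], .nil t, rfl⟩
  | cons c v ih =>
    have hcv := (nodup_cons.mp hnd).1
    have hsub : v <+ c :: v := sublist_cons_self c v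
    have hclosed' : BetweenClosed v := by
      intro y z hyz x hyx hxz
      rcases mem_cons.mp (hclosed (hyz.cons c) hyx hxz) with rfl | hx
      · have hy : y ≠ x := fun h => hcv (h ▸ hyz.subset (by simp))
        have hz : z ≠ x := fun h => hcv (h ▸ hyz.subset (by simp))
        exact absurd ⟨x, y, z, by omega, by omega, hyz.cons_cons x⟩ h213
      · exact hx
    obtain ⟨P, hP, rfl⟩ := ih (nodup_cons.mp hnd).2 (fun h => h213 (h.mono hsub))
      (fun h => h132 (h.mono hsub)) hclosed' (fun x hx => hbd x (mem_cons_of_mem c hx))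
    exact exists_blocks_eq_cons hP (hbd c mem_cons_self) hcv h132 hclosed

def desCount : List ℕ → ℕ
  | a :: b :: l => (if b < a then 1 else 0) + desCount (b :: l)
  | _ => 0

theorem desCount_eq_sum (l : List ℕ) :
    desCount l =
      ∑ i ∈ Finset.range (l.length - 1), if l.getD (i + 1) 0 < l.getD i 0 then 1 else 0 := by
  induction l with
  | nil => rfl
  | cons a l ih =>
    cases l with
    | nil => rfl
    | cons b l =>
      rw [desCount, ih]
      simp only [length_cons, Nat.add_sub_cancel, Finset.sum_range_succ', getD_cons_succ,
        getD_cons_zero]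
      ring

theorem cdes_cons (a : ℕ) (l : List ℕ) : cdes (a :: l) = desCount (a :: l ++ [a]) := by
  rw [cdes, Finset.card_filter, desCount_eq_sum]
  simp only [length_append, length_cons, length_nil, Nat.add_sub_cancel]
  refine Finset.sum_congr rfl fun i hi => ?_
  rw [Finset.mem_range] at hi
  have hi' : i < (a :: l).length := by simpa using hi
  rcases Nat.lt_or_ge (i + 1) (l.length + 1) with h | h
  · simp only [Nat.mod_eq_of_lt h, getD_append _ _ _ _ hi',
      getD_append _ _ _ _ (show i + 1 < (a :: l).length by simpa using h)]
  · obtain rfl : i = l.length := by omega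
    have hl : l.length < (a :: l).length := by simp
    simp only [Nat.mod_self, getD_cons_zero, getD_append _ _ _ _ hl]
    simp

theorem desCount_append_cons (A : List ℕ) (x : ℕ) (B : List ℕ) :
    desCount (A ++ x :: B) = desCount (A ++ [x]) + desCount (x :: B) := by
  induction A with
  | nil => simp [desCount]
  | cons a A ih =>
    cases A with
    | nil => simp [desCount]
    | cons b A => simp only [cons_append, desCount] at ih ⊢; rw [ih]; ring

theorem desCount_eq_zero_of_pairwise {l : List ℕ} (h : l.Pairwise (· < ·)) : desCount l = 0 := by
  induction l with
  | nil => rfl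
  | cons a l ih =>
    cases l with
    | nil => rfl
    | cons b l =>
      rw [pairwise_cons] at h
      have := h.1 b mem_cons_self
      rw [desCount, if_neg (by omega), ih h.2]

theorem desCount_cons_range'_append {x a ℓ : ℕ} (F : List ℕ) (hℓ : 1 ≤ ℓ) :
    desCount (x :: (range' a ℓ ++ F)) = (if a < x then 1 else 0) + desCount ((a + ℓ - 1) :: F) := by
  induction ℓ generalizing a x with
  | zero => omega
  | succ ℓ ih =>
    rcases Nat.eq_zero_or_pos ℓ with rfl | hℓ
    · rfl
    · rw [range'_succ, cons_append, desCount, ih hℓ, if_neg (show ¬ a + 1 < a by omega),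
        Nat.zero_add, ← Nat.add_assoc, Nat.add_sub_cancel, Nat.add_right_comm, Nat.add_sub_cancel]

theorem IsBlockSeq.desCount_cons_blocks_append {t x y : ℕ} {P : List (ℕ × ℕ)}
    (hP : IsBlockSeq t P) (htx : t < x) (hx : 2 ≤ x) (hy : y < 2) :
    desCount (x :: (blocks P ++ [y])) = P.length + 1 := by
  induction hP generalizing x with
  | nil => simp [desCount, show y < x by omega]
  | cons ha hℓ hat _ ih =>
    rw [blocks_cons, append_assoc, desCount_cons_range'_append _ hℓ, if_pos (by omega),
      ih (by omega) (by omega), length_cons]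
    ring

def gaps (n : ℕ) (P : List (ℕ × ℕ)) : List ℕ := (range' 2 (n - 2)).filter (· ∉ blocks P)

def circOfBlocks (n : ℕ) (P : List (ℕ × ℕ)) : List ℕ := 1 :: (gaps n P ++ n :: blocks P)

theorem mem_gaps {n x : ℕ} {P : List (ℕ × ℕ)} :
    x ∈ gaps n P ↔ 2 ≤ x ∧ x < n ∧ x ∉ blocks P := by
  simp only [gaps, mem_filter, mem_range'_1, decide_not, Bool.not_eq_eq_eq_not, Bool.not_true,
    decide_eq_false_iff_not]
  grind

theorem pairwise_gaps (n : ℕ) (P : List (ℕ × ℕ)) : (gaps n P).Pairwise (· < ·) :=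
  (pairwise_lt_range' ..).sublist filter_sublist

section Avoidance

variable {n t : ℕ} {u : List ℕ} {P : List (ℕ × ℕ)}

theorem not_has213_append (hP : IsBlockSeq t P) (htn : t < n) (hu : u.Pairwise (· < ·))
    (hun : ∀ x ∈ u, x < n ∧ x ∉ blocks P) : ¬ Has213 (u ++ n :: blocks P) := by
  rintro ⟨x, y, z, hyx, hxz, hs⟩
  rcases triple_sublist_append_cases hs with h | ⟨h, -⟩ | ⟨hx, h⟩ | h
  · have := hu.sublist h; simp at this; omega
  · have := hu.sublist h; simp at this; omega
  · rcases sublist_cons_iff.mp h with h | ⟨_, ⟨rfl, -⟩, -⟩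
    · exact (hun x hx).2 (hP.betweenClosed h hyx.le hxz.le)
    · exact absurd (hun x hx).1 (by omega)
  · rcases sublist_cons_iff.mp h with h | ⟨_, ⟨rfl, rfl⟩, h⟩
    · exact hP.not_has213 ⟨x, y, z, hyx, hxz, h⟩
    · have := hP.bounds z (h.subset (by simp)); omega

theorem not_has4132_append (hP : IsBlockSeq t P) (hu : u.Pairwise (· < ·))
    (hun : ∀ x ∈ u, x < n ∧ x ∉ blocks P) : ¬ Has4132 (u ++ n :: blocks P) := by
  rintro ⟨a, b, c, d, hbd, hdc, hca, hs⟩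
  have no132 : ¬ [b, c, d] <+ blocks P := fun h => hP.not_has132 ⟨b, c, d, hbd, hdc, h⟩
  rcases quadruple_sublist_append_cases hs with h | ⟨h, -⟩ | ⟨h, -⟩ | ⟨ha, h⟩ | h
  · have := hu.sublist h; simp at this; omega
  · have := hu.sublist h; simp at this; omega
  · have := hu.sublist h; simp at this; omega
  · rcases sublist_cons_iff.mp h with h | ⟨_, ⟨rfl, -⟩, -⟩
    · exact no132 h
    · exact absurd (hun a ha).1 (by omega)
  · rcases sublist_cons_iff.mp h with h | ⟨_, ⟨rfl, rfl⟩, h⟩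
    · exact no132 ((sublist_cons_self a _).trans h)
    · exact no132 h

end Avoidance

section CircOfBlocks

variable {n : ℕ} {P : List (ℕ × ℕ)}

theorem isCirc_circOfBlocks (hn : 2 ≤ n) (hP : IsBlockSeq (n - 1) P) :
    IsCirc n (circOfBlocks n P) := by
  refine ⟨?_, rfl⟩
  have hbd := hP.bounds
  have hnd : (circOfBlocks n P).Nodup := by
    simp only [circOfBlocks, nodup_cons, nodup_append, mem_append, mem_cons, mem_gaps]
    refine ⟨?_, (pairwise_gaps n P).nodup, ⟨?_, hP.nodup_blocks⟩, ?_⟩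
    · rintro (h | rfl | h)
      · omega
      · omega
      · have := hbd 1 h; omega
    · intro h; have := hbd n h; omega
    · rintro x hx y (rfl | hy) rfl
      · omega
      · exact hx.2.2 hy
  refine (perm_ext_iff_of_nodup hnd nodup_range').mpr fun x => ?_
  simp only [circOfBlocks, mem_cons, mem_append, mem_gaps, mem_range'_1]
  have := hbd x
  by_cases hx : x ∈ blocks P <;> grind

theorem cdes_circOfBlocks (hn : 2 ≤ n) (hP : IsBlockSeq (n - 1) P) :
    cdes (circOfBlocks n P) = P.length + 1 := by
  have increasing : (1 :: gaps n P ++ [n]).Pairwise (· < ·) := by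
    simp only [cons_append, pairwise_cons, pairwise_append, mem_append, mem_gaps, mem_singleton]
    refine ⟨?_, pairwise_gaps n P, by simp, ?_⟩
    · rintro x (hx | rfl) <;> omega
    · rintro x hx y rfl; omega
  rw [circOfBlocks, cdes_cons, cons_append, append_assoc, cons_append, ← cons_append,
    desCount_append_cons, desCount_eq_zero_of_pairwise increasing,
    hP.desCount_cons_blocks_append (by omega) hn (by omega), Nat.zero_add]

theorem not_ccontains_circOfBlocks (hn : 2 ≤ n) (hP : IsBlockSeq (n - 1) P) :
    ¬ CContains (circOfBlocks n P) [1, 3, 2, 4] := by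
  have hgaps : ∀ x ∈ gaps n P, x < n ∧ x ∉ blocks P := fun x hx => by
    rw [mem_gaps] at hx; exact hx.2
  rw [circOfBlocks, ccontains_cons_one_iff, not_or]
  · exact ⟨not_has213_append hP (by omega) (pairwise_gaps n P) hgaps,
      not_has4132_append hP (pairwise_gaps n P) hgaps⟩
  · simp only [mem_append, mem_cons, mem_gaps]
    rintro x (hx | rfl | hx)
    exacts [hx.1, hn, (hP.bounds x hx).1]

theorem circOfBlocks_inj {Q : List (ℕ × ℕ)} (hP : IsBlockSeq (n - 1) P)
    (hQ : IsBlockSeq (n - 1) Q) (h : circOfBlocks n P = circOfBlocks n Q) : P = Q := by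
  have hn : ∀ {R}, IsBlockSeq (n - 1) R → n ∉ gaps n R ∧ n ∉ blocks R := fun hR =>
    ⟨fun h => by rw [mem_gaps] at h; omega, fun h => by have := hR.bounds n h; omega⟩
  rw [circOfBlocks, circOfBlocks, cons_inj_right,
    append_cons_inj_of_notMem (hn hP).1 (hn hP).2] at h
  exact hP.eq_of_blocks_eq hQ h.2.2

theorem pairwise_lt_of_not_has213 {u : List ℕ} (hu : u.Nodup) (hlt : ∀ x ∈ u, x < n)
    (h : ¬ Has213 (u ++ [n])) : u.Pairwise (· < ·) := by
  rw [pairwise_iff_forall_sublist]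
  intro x y hxy
  have hne : x ≠ y := pairwise_iff_forall_sublist.mp hu hxy
  by_contra hyx
  exact h ⟨x, y, n, by omega, hlt x (hxy.subset (by simp)), hxy.append (Sublist.refl [n])⟩

theorem betweenClosed_of_not_has213 {u v : List ℕ} (hv : ∀ x ∈ v, 2 ≤ x ∧ x < n)
    (hcover : ∀ x, 2 ≤ x → x < n → x ∈ u ∨ x ∈ v) (hdisj : ∀ x ∈ u, x ∉ v)
    (h : ¬ Has213 (u ++ v)) : BetweenClosed v := by
  intro y z hyz x hyx hxz
  have hy := hyz.subset (by simp : y ∈ [y, z])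
  have hz := hyz.subset (by simp : z ∈ [y, z])
  have := hv y hy
  have := hv z hz
  refine (hcover x (by omega) (by omega)).resolve_left fun hxu => ?_
  have hxy : x ≠ y := fun e => hdisj x hxu (e ▸ hy)
  have hxz : x ≠ z := fun e => hdisj x hxu (e ▸ hz)
  exact h ⟨x, y, z, by omega, by omega, (singleton_sublist.mpr hxu).append hyz⟩

theorem eq_gaps {u : List ℕ} (hu : u.Pairwise (· < ·)) (hbd : ∀ x ∈ u, 2 ≤ x ∧ x < n)
    (hcover : ∀ x, 2 ≤ x → x < n → x ∈ u ∨ x ∈ blocks P) (hdisj : ∀ x ∈ u, x ∉ blocks P) :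
    u = gaps n P :=
  hu.eq_of_mem_iff (pairwise_gaps n P) fun x => by
    rw [mem_gaps]
    exact ⟨fun hx => ⟨(hbd x hx).1, (hbd x hx).2, hdisj x hx⟩,
      fun ⟨h2, hxn, hxP⟩ => (hcover x h2 hxn).resolve_right hxP⟩

theorem exists_eq_gaps_append (hn : 2 ≤ n) {w : List ℕ} (hw : w.Perm (range' 2 (n - 1)))
    (h213 : ¬ Has213 w) (h4132 : ¬ Has4132 w) :
    ∃ P, IsBlockSeq (n - 1) P ∧ w = gaps n P ++ n :: blocks P := by
  have hmem : ∀ x, x ∈ w ↔ 2 ≤ x ∧ x ≤ n := fun x => by rw [hw.mem_iff, mem_range'_1]; omega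
  obtain ⟨u, v, rfl⟩ := append_of_mem ((hmem n).mpr ⟨hn, le_rfl⟩)
  obtain ⟨hu, hnv, hdisj⟩ := nodup_append.mp (hw.nodup_iff.mpr nodup_range')
  obtain ⟨hnv, hv⟩ := nodup_cons.mp hnv
  simp only [mem_append, mem_cons] at hmem
  have hnu : n ∉ u := fun h => hdisj n h n mem_cons_self rfl
  have huv : ∀ x ∈ u, x ∉ v := fun x hx h => hdisj x hx x (mem_cons_of_mem n h) rfl
  have hu_bd : ∀ x ∈ u, 2 ≤ x ∧ x < n := fun x hx => by
    have := (hmem x).mp (Or.inl hx); have : x ≠ n := fun e => hnu (e ▸ hx); omega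
  have hv_bd : ∀ x ∈ v, 2 ≤ x ∧ x < n := fun x hx => by
    have := (hmem x).mp (Or.inr (Or.inr hx)); have : x ≠ n := fun e => hnv (e ▸ hx); omega
  have hcover : ∀ x, 2 ≤ x → x < n → x ∈ u ∨ x ∈ v := fun x h2 hxn => by
    have := (hmem x).mpr ⟨h2, hxn.le⟩; grind
  have huv_sub : u ++ v <+ u ++ n :: v := (sublist_cons_self n v).append_left u
  have h132 : ¬ Has132 v := fun ⟨x, y, z, hxz, hzy, hs⟩ => h4132
    ⟨n, x, y, z, hxz, hzy, (hv_bd y (hs.subset (by simp))).2,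
      (hs.cons_cons n).trans (sublist_append_right u _)⟩
  obtain ⟨P, hP, rfl⟩ := exists_blocks_eq (t := n - 1) hv
    (fun h => h213 (h.mono ((sublist_append_right u v).trans huv_sub))) h132
    (betweenClosed_of_not_has213 hv_bd hcover huv fun h => h213 (h.mono huv_sub))
    fun x hx => ⟨(hv_bd x hx).1, by have := (hv_bd x hx).2; omega⟩
  have hu_inc := pairwise_lt_of_not_has213 hu (fun x hx => (hu_bd x hx).2)
    fun h => h213 (h.mono ((nil_sublist _).cons_cons n |>.append_left u))
  exact ⟨P, hP, by rw [← eq_gaps hu_inc hu_bd hcover huv]⟩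

theorem exists_eq_circOfBlocks (hn : 2 ≤ n) {l : List ℕ} (hl : IsCirc n l)
    (havoid : ¬ CContains l [1, 3, 2, 4]) : ∃ P, IsBlockSeq (n - 1) P ∧ l = circOfBlocks n P := by
  obtain ⟨hperm, hhead⟩ := hl
  obtain ⟨w, rfl⟩ := head?_eq_some_iff.mp hhead
  obtain ⟨m, rfl⟩ : ∃ m, n = m + 1 := ⟨n - 1, by omega⟩
  rw [range'_succ] at hperm
  have hw := hperm.cons_inv
  rw [ccontains_cons_one_iff fun x hx => (mem_range'_1.mp (hw.subset hx)).1, not_or] at havoid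
  obtain ⟨P, hP, rfl⟩ := exists_eq_gaps_append hn (by simpa using hw) havoid.1 havoid.2
  exact ⟨P, hP, rfl⟩

end CircOfBlocks

def blockChoices (t : ℕ) : Finset (ℕ × ℕ) :=
  (Finset.Icc 2 t ×ˢ Finset.Icc 1 t).filter fun p => p.1 + p.2 ≤ t + 1

def blockSeqs : ℕ → ℕ → Finset (List (ℕ × ℕ))
  | _, 0 => {[]}
  | t, j + 1 => (blockChoices t).biUnion fun p => (blockSeqs (p.1 - 1) j).image (cons p)

theorem mem_blockSeqs {t j : ℕ} {P : List (ℕ × ℕ)} :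
    P ∈ blockSeqs t j ↔ IsBlockSeq t P ∧ P.length = j := by
  induction j generalizing t P with
  | zero =>
    rw [blockSeqs, Finset.mem_singleton, length_eq_zero_iff]
    exact ⟨by rintro rfl; exact ⟨.nil t, rfl⟩, And.right⟩
  | succ j ih =>
    simp only [blockSeqs, Finset.mem_biUnion, Finset.mem_image, blockChoices, Finset.mem_filter,
      Finset.mem_product, Finset.mem_Icc]
    constructor
    · rintro ⟨⟨a, ℓ⟩, ⟨⟨⟨ha, -⟩, hℓ, -⟩, hat⟩, Q, hQ, rfl⟩
      obtain ⟨hQ', rfl⟩ := ih.mp hQ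
      exact ⟨.cons ha hℓ hat hQ', rfl⟩
    · rintro ⟨hP, hlen⟩
      cases hP with
      | nil => simp at hlen
      | cons ha hℓ hat hQ =>
        exact ⟨_, ⟨⟨⟨ha, by omega⟩, hℓ, by omega⟩, hat⟩, _, ih.mpr ⟨hQ, by simpa using hlen⟩, rfl⟩

theorem sum_Icc_choose_shift (j t : ℕ) :
    ∑ a ∈ Finset.Icc 2 t, (a - 2 + j).choose (2 * j) = (t - 1 + j).choose (2 * j + 1) := by
  induction t with
  | zero =>
    rw [Finset.Icc_eq_empty (by omega), Finset.sum_empty, Nat.choose_eq_zero_of_lt (by omega)]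
  | succ t ih =>
    rcases Nat.eq_zero_or_pos t with rfl | ht
    · rw [Finset.Icc_eq_empty (by omega), Finset.sum_empty, Nat.choose_eq_zero_of_lt (by omega)]
    · rw [Finset.sum_Icc_succ_top (by omega), ih, show t + 1 - 1 + j = (t - 1 + j) + 1 by omega,
        Nat.choose_succ_succ, show t + 1 - 2 + j = t - 1 + j by omega, add_comm]

theorem sum_Icc_mul_choose_shift (j t : ℕ) :
    ∑ a ∈ Finset.Icc 2 t, (t + 1 - a) * (a - 2 + j).choose (2 * j) =
      (t + j).choose (2 * j + 2) := by
  induction t with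
  | zero =>
    rw [Finset.Icc_eq_empty (by omega), Finset.sum_empty, Nat.choose_eq_zero_of_lt (by omega)]
  | succ t ih =>
    rcases Nat.eq_zero_or_pos t with rfl | ht
    · rw [Finset.Icc_eq_empty (by omega), Finset.sum_empty, Nat.choose_eq_zero_of_lt (by omega)]
    · have split : ∀ a ∈ Finset.Icc 2 (t + 1), (t + 1 + 1 - a) * (a - 2 + j).choose (2 * j) =
          (t + 1 - a) * (a - 2 + j).choose (2 * j) + (a - 2 + j).choose (2 * j) := by
        intro a ha
        rw [Finset.mem_Icc] at ha
        rw [show t + 1 + 1 - a = (t + 1 - a) + 1 by omega, add_one_mul]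
      rw [Finset.sum_congr rfl split, Finset.sum_add_distrib, sum_Icc_choose_shift,
        Finset.sum_Icc_succ_top (by omega), ih, Nat.sub_self, zero_mul, add_zero,
        show t + 1 - 1 + j = t + j by omega, show t + 1 + j = (t + j) + 1 by omega,
        Nat.choose_succ_succ, add_comm]

theorem card_blockSeqs (j t : ℕ) : (blockSeqs t j).card = (t - 1 + j).choose (2 * j) := by
  induction j generalizing t with
  | zero => simp [blockSeqs]
  | succ j ih =>
    have disjoint : (blockChoices t : Set (ℕ × ℕ)).PairwiseDisjoint
        fun p => (blockSeqs (p.1 - 1) j).image (cons p) := by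
      intro p _ q _ hpq
      simp only [Function.onFun, Finset.disjoint_left, Finset.mem_image]
      rintro _ ⟨P, -, rfl⟩ ⟨Q, -, h⟩
      exact hpq (cons.inj h).1.symm
    have card_image (p : ℕ × ℕ) :
        ((blockSeqs (p.1 - 1) j).image (cons p)).card = (p.1 - 2 + j).choose (2 * j) := by
      rw [Finset.card_image_of_injective _ cons_injective, ih, Nat.sub_sub]
    have sum_lengths : ∀ a ∈ Finset.Icc 2 t,
        ∑ ℓ ∈ Finset.Icc 1 t, (if a + ℓ ≤ t + 1 then (a - 2 + j).choose (2 * j) else 0) =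
          (t + 1 - a) * (a - 2 + j).choose (2 * j) := by
      intro a ha
      rw [Finset.mem_Icc] at ha
      rw [← Finset.sum_filter, Finset.sum_const, smul_eq_mul,
        show (Finset.Icc 1 t).filter (fun ℓ => a + ℓ ≤ t + 1) = Finset.Icc 1 (t + 1 - a) by
          ext; simp only [Finset.mem_filter, Finset.mem_Icc]; omega,
        Nat.card_Icc, Nat.add_sub_cancel]
    rw [blockSeqs, Finset.card_biUnion disjoint, Finset.sum_congr rfl fun p _ => card_image p,
      blockChoices, Finset.sum_filter, Finset.sum_product, Finset.sum_congr rfl sum_lengths,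
      sum_Icc_mul_choose_shift]
    rcases Nat.eq_zero_or_pos t with rfl | ht
    · rw [Nat.choose_eq_zero_of_lt (by omega), Nat.choose_eq_zero_of_lt (by omega)]
    · congr 1; omega

theorem avoiders_eq_image {n i : ℕ} (hn : 2 ≤ n) (hi : 1 ≤ i) :
    {l : List ℕ | IsCirc n l ∧ ¬ CContains l [1, 3, 2, 4] ∧ cdes l = i} =
      (blockSeqs (n - 1) (i - 1)).image (circOfBlocks n) := by
  ext l
  simp only [Set.mem_ofPred_eq, Finset.coe_image, Set.mem_image, Finset.mem_coe, mem_blockSeqs]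
  constructor
  · rintro ⟨hl, havoid, rfl⟩
    obtain ⟨P, hP, rfl⟩ := exists_eq_circOfBlocks hn hl havoid
    exact ⟨P, ⟨hP, by rw [cdes_circOfBlocks hn hP, Nat.add_sub_cancel]⟩, rfl⟩
  · rintro ⟨P, ⟨hP, hlen⟩, rfl⟩
    exact ⟨isCirc_circOfBlocks hn hP, not_ccontains_circOfBlocks hn hP,
      by rw [cdes_circOfBlocks hn hP]; omega⟩

theorem circOfBlocks_injOn (n j : ℕ) : Set.InjOn (circOfBlocks n) (blockSeqs (n - 1) j) :=
  fun _ hP _ hQ => circOfBlocks_inj (mem_blockSeqs.mp hP).1 (mem_blockSeqs.mp hQ).1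

end Cdes1324

theorem cdes_count_1324_general (n i : ℕ) (hi1 : 1 ≤ i) (hi2 : i ≤ n - 1) :
    {l : List ℕ | IsCirc n l ∧ ¬ CContains l [1, 3, 2, 4] ∧ cdes l = i}.ncard
      = (n + i - 3).choose (n - i - 1) := by
  rw [Cdes1324.avoiders_eq_image (by omega) hi1, Set.ncard_coe_finset,
    Finset.card_image_of_injOn (Cdes1324.circOfBlocks_injOn n (i - 1)), Cdes1324.card_blockSeqs,
    show n - 1 - 1 + (i - 1) = n + i - 3 by omega]
  exact (Nat.choose_symm_of_eq_add (by omega)).symm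

/-- For `n ≥ 2` and `1 ≤ i ≤ n-1`, the number of `[1324]`-avoiding circular
permutations of `[n]` with exactly `i` cyclic descents is `C(n+i-3, n-i-1)`. -/
theorem cdes_count_1324 (n i : ℕ) (hn : 2 ≤ n) (hi1 : 1 ≤ i) (hi2 : i ≤ n - 1) :
    {l : List ℕ | IsCirc n l ∧ ¬ CContains l [1, 3, 2, 4] ∧ cdes l = i}.ncard
      = (n + i - 3).choose (n - i - 1) :=
  cdes_count_1324_general n i hi1 hi2
end
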